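/- arXiv:1406.0352 — 3 statements merged into one kernel-verified Lean document; each statement's English description precedes it below -/
import Mathlib

section
/- Let α and β be fixed partitions. There exists a bijection between the set of triples ((𝐢,𝐣), T, U), where (𝐢,𝐣) is a biword (a finite multiset of pairs of positive integers) and, for some partition μ contained in both α and β, T is an SSYT of skew shape α/μ and U is an SSYT of skew shape β/μ, and the set of pairs (P, Q), where, for some partition λ containing both α and β, P is an SSYT of skew shape λ/β and Q is an SSYT of skew shape λ/α, such that the bijection satisfies: the multiset of entries of P equals the multiset sum of the multiset of first components of the biletters of (𝐢,𝐣) and the multiset of entries of T, and the multiset of entries of Q equals the multiset sum of the multiset of second components of the biletters of (𝐢,𝐣) and the multiset of entries of U. -/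
/-!
Fomin's growth diagrams. Partitions are encoded by their row-length sequences `ℕ → ℕ`. A skew
tableau of shape `λ/μ` is the same as a chain `μ = λ⁰ ⊆ λ¹ ⊆ ⋯` of horizontal strips, `λⁿ`
being `μ` together with the cells of entry `≤ n`, that ends at `λ`; a biword is the same as its
multiplicity matrix `a`. Put the chain of `T` on the edge `j = 0` and that of `U` on the edge
`i = 0` of the grid `ℕ × ℕ`, and fill the grid by Fomin's local rule. The rule is a bijection
from pairs of horizontal strips `a/μ`, `b/μ` with a multiplicity `k` to pairs of horizontal
strips `l/a`, `l/b`, and satisfies `|l| + |μ| = k + |a| + |b|`. Beyond a bound the diagram is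
constant in each direction, and its two far edges are the chains of `P` and `Q`. Running the
rule backwards from those edges reconstructs the whole diagram, which gives bijectivity; summing
the size identity along row `n` shows that `P` gains, at step `n`, the biletters with first
component `n` in addition to what `T` gains, and symmetrically for `Q` and `U`.
-/

/-- A semistandard Young tableau of skew shape `lam / mu`: a filling of the cells of `lam`
not in `mu` with positive integers, weakly increasing along rows and strictly increasing
down columns (cells are indexed by `(row, column)`, both `0`-indexed). -/
structure SkewSSYT (lam mu : YoungDiagram) where
  entry : ℕ → ℕ → ℕ
  pos : ∀ i j, (i, j) ∈ lam → (i, j) ∉ mu → 0 < entry i j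
  zeros : ∀ i j, ¬((i, j) ∈ lam ∧ (i, j) ∉ mu) → entry i j = 0
  row_weak : ∀ i j1 j2, j1 < j2 → (i, j1) ∈ lam → (i, j1) ∉ mu →
    (i, j2) ∈ lam → (i, j2) ∉ mu → entry i j1 ≤ entry i j2
  col_strict : ∀ i1 i2 j, i1 < i2 → (i1, j) ∈ lam → (i1, j) ∉ mu →
    (i2, j) ∈ lam → (i2, j) ∉ mu → entry i1 j < entry i2 j

/-- The multiset of entries of a skew semistandard Young tableau. -/
def SkewSSYT.entries {lam mu : YoungDiagram} (T : SkewSSYT lam mu) : Multiset ℕ :=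
  (lam.cells \ mu.cells).val.map fun p => T.entry p.1 p.2

/-- The input data of the Sagan–Stanley skew RSK correspondence (for fixed partitions
`α`, `β`): a biword, i.e. a finite multiset of biletters (pairs of positive integers),
together with a partition `μ` contained in both `α` and `β`, a skew SSYT `T` of shape
`α/μ` and a skew SSYT `U` of shape `β/μ`. -/
structure SkewRSKInput (α β : YoungDiagram) where
  bw : Multiset (ℕ × ℕ)
  bw_pos : ∀ p ∈ bw, 0 < p.1 ∧ 0 < p.2
  μ : YoungDiagram
  hμα : μ ≤ α
  hμβ : μ ≤ β
  T : SkewSSYT α μ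
  U : SkewSSYT β μ

/-- The output data of the Sagan–Stanley skew RSK correspondence (for fixed partitions
`α`, `β`): a partition `lam` containing both `α` and `β`, a skew SSYT `P` of shape
`lam/β` and a skew SSYT `Q` of shape `lam/α`. -/
structure SkewRSKOutput (α β : YoungDiagram) where
  lam : YoungDiagram
  hαlam : α ≤ lam
  hβlam : β ≤ lam
  P : SkewSSYT lam β
  Q : SkewSSYT lam α

open Finset
open Filter (atTop eventually_atTop eventually_ge_atTop eventually_gt_atTop)

namespace SkewRSK

structure IsHStrip (μ l : ℕ → ℕ) : Prop where
  le : ∀ i, μ i ≤ l i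
  succ_le : ∀ i, l (i + 1) ≤ μ i

def IsHStripChain (r : ℕ → ℕ → ℕ) : Prop := ∀ n, IsHStrip (r n) (r (n + 1))

def VanishesFrom (f : ℕ → ℕ) (N : ℕ) : Prop := ∀ i, N ≤ i → f i = 0

theorem VanishesFrom.mono {f : ℕ → ℕ} {N M : ℕ} (h : VanishesFrom f N) (hNM : N ≤ M) :
    VanishesFrom f M :=
  fun i hi => h i (hNM.trans hi)

theorem VanishesFrom.of_le {f g : ℕ → ℕ} {N : ℕ} (hg : VanishesFrom g N)
    (h : ∀ i, f i ≤ g i) : VanishesFrom f N :=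
  fun i hi => Nat.eq_zero_of_le_zero (hg i hi ▸ h i)

theorem VanishesFrom.sum_range_eq {f : ℕ → ℕ} {N M : ℕ} (h : VanishesFrom f N)
    (hNM : N ≤ M) : ∑ i ∈ range M, f i = ∑ i ∈ range N, f i :=
  (sum_subset (range_subset_range.2 hNM) fun i _ hi => h i (by simpa using hi)).symm

theorem IsHStrip.antitone_left {μ l : ℕ → ℕ} (h : IsHStrip μ l) : Antitone μ :=
  antitone_nat_of_succ_le fun i => (h.le (i + 1)).trans (h.succ_le i)

theorem IsHStrip.antitone_right {μ l : ℕ → ℕ} (h : IsHStrip μ l) : Antitone l :=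
  antitone_nat_of_succ_le fun i => (h.succ_le i).trans (h.le i)

theorem IsHStrip.refl {f : ℕ → ℕ} (hf : Antitone f) : IsHStrip f f :=
  ⟨fun _ => le_rfl, fun i => hf i.le_succ⟩

namespace IsHStripChain

variable {r : ℕ → ℕ → ℕ}

theorem le (hr : IsHStripChain r) {m n : ℕ} (h : m ≤ n) (i : ℕ) : r m i ≤ r n i := by
  induction n, h using Nat.le_induction with
  | base => exact le_rfl
  | succ n _ ih => exact ih.trans ((hr n).le i)

theorem le_of_eq (hr : IsHStripChain r) {f g : ℕ → ℕ} {N : ℕ} (h0 : r 0 = f) (hN : r N = g)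
    (i : ℕ) : f i ≤ g i :=
  h0 ▸ hN ▸ hr.le (Nat.zero_le N) i

theorem pred (hr : IsHStripChain r) (n : ℕ) : IsHStrip (r (n - 1)) (r n) := by
  cases n with
  | zero => exact IsHStrip.refl (hr 0).antitone_left
  | succ n => exact hr n

end IsHStripChain

/-- Fomin's local rule for RSK. Row `i + 1` of the result is the larger of the two rows of
`a` and `b` plus the cells bumped out of row `i`, namely `min (a i) (b i) - μ i`; row `0`
receives the `k` new letters. -/
def grow (μ a b : ℕ → ℕ) (k : ℕ) : ℕ → ℕ
  | 0 => max (a 0) (b 0) + k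
  | i + 1 => max (a (i + 1)) (b (i + 1)) + (min (a i) (b i) - μ i)

def shrink (a b l : ℕ → ℕ) (i : ℕ) : ℕ :=
  min (a i) (b i) - (l (i + 1) - max (a (i + 1)) (b (i + 1)))

def shrinkMult (a b l : ℕ → ℕ) : ℕ := l 0 - max (a 0) (b 0)

section LocalRule

variable {μ a b l : ℕ → ℕ} {k : ℕ}

theorem grow_comm : grow μ a b k = grow μ b a k := by
  funext i; cases i <;> simp only [grow, max_comm, min_comm]

theorem shrink_comm : shrink a b l = shrink b a l := by
  funext i; simp only [shrink, max_comm, min_comm]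

theorem isHStrip_grow_left (ha : IsHStrip μ a) (hb : IsHStrip μ b) :
    IsHStrip a (grow μ a b k) := by
  constructor <;> intro i
  · cases i <;> simp only [grow] <;> omega
  · have := ha.succ_le i; have := hb.succ_le i; have := ha.le i; have := hb.le i
    simp only [grow]; omega

theorem isHStrip_grow_right (ha : IsHStrip μ a) (hb : IsHStrip μ b) :
    IsHStrip b (grow μ a b k) :=
  grow_comm (μ := μ) ▸ isHStrip_grow_left hb ha

theorem vanishesFrom_grow {N : ℕ} (ha : VanishesFrom a N) (hb : VanishesFrom b N) :
    VanishesFrom (grow μ a b k) (N + 1) := by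
  rintro (_ | i) hi
  · omega
  · have := ha (i + 1) (by omega); have := hb (i + 1) (by omega)
    have := ha i (by omega); have := hb i (by omega)
    simp only [grow]; omega

theorem isHStrip_shrink_left (ha : IsHStrip a l) (hb : IsHStrip b l) :
    IsHStrip (shrink a b l) a := by
  constructor <;> intro i
  · simp only [shrink]; omega
  · have := ha.succ_le i; have := hb.succ_le i; have := ha.le (i + 1); have := hb.le (i + 1)
    simp only [shrink]; omega

theorem isHStrip_shrink_right (ha : IsHStrip a l) (hb : IsHStrip b l) :
    IsHStrip (shrink a b l) b :=
  shrink_comm (l := l) ▸ isHStrip_shrink_left hb ha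

theorem vanishesFrom_shrink {N : ℕ} (ha : VanishesFrom a N) : VanishesFrom (shrink a b l) N := by
  intro i hi; have := ha i hi; simp only [shrink]; omega

theorem grow_shrink (ha : IsHStrip a l) (hb : IsHStrip b l) :
    grow (shrink a b l) a b (shrinkMult a b l) = l := by
  funext i
  cases i with
  | zero => have := ha.le 0; have := hb.le 0; simp only [grow, shrinkMult]; omega
  | succ i =>
    have := ha.le (i + 1); have := hb.le (i + 1); have := ha.succ_le i; have := hb.succ_le i
    simp only [grow, shrink]; omega

theorem shrink_grow (ha : IsHStrip μ a) (hb : IsHStrip μ b) :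
    shrink a b (grow μ a b k) = μ := by
  funext i
  have := ha.le i; have := hb.le i
  simp only [shrink, grow]; omega

theorem shrinkMult_grow : shrinkMult a b (grow μ a b k) = k := by
  simp only [shrinkMult, grow]; omega

theorem grow_self_left (hb : IsHStrip μ b) : grow μ μ b 0 = b := by
  funext i
  cases i with
  | zero => have := hb.le 0; simp only [grow]; omega
  | succ i =>
    have := hb.le i; have := hb.le (i + 1); have := hb.succ_le i
    simp only [grow]; omega

theorem sum_grow_add_min (ha : IsHStrip μ a) (hb : IsHStrip μ b) (M : ℕ) :
    ∑ i ∈ range (M + 1), grow μ a b k i + ∑ i ∈ range M, μ i + min (a M) (b M) =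
      k + ∑ i ∈ range (M + 1), a i + ∑ i ∈ range (M + 1), b i := by
  induction M with
  | zero => simp only [zero_add, sum_range_one, sum_range_zero]; simp only [grow]; omega
  | succ M ih =>
    have := ha.le M; have := hb.le M
    have hg : grow μ a b k (M + 1) = max (a (M + 1)) (b (M + 1)) + (min (a M) (b M) - μ M) := rfl
    rw [sum_range_succ _ (M + 1), sum_range_succ μ, sum_range_succ a (M + 1),
      sum_range_succ b (M + 1), hg]
    omega

theorem sum_grow {N M : ℕ} (ha : IsHStrip μ a) (hb : IsHStrip μ b) (hva : VanishesFrom a N)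
    (hM : N < M) :
    ∑ i ∈ range M, grow μ a b k i + ∑ i ∈ range M, μ i =
      k + ∑ i ∈ range M, a i + ∑ i ∈ range M, b i := by
  obtain ⟨M, rfl⟩ : ∃ M', M = M' + 1 := ⟨M - 1, by omega⟩
  have h := sum_grow_add_min (k := k) ha hb M
  have ha0 := hva M (by omega)
  have hμ0 : μ M = 0 := by have := ha.le M; omega
  rw [sum_range_succ μ, hμ0]
  omega

end LocalRule

structure InputBound (α β : ℕ → ℕ) (a t u : ℕ → ℕ → ℕ) (N : ℕ) : Prop where
  a_eq_zero : ∀ i j, N < i ∨ N < j → a i j = 0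
  t_eq : ∀ n, N ≤ n → t n = α
  u_eq : ∀ n, N ≤ n → u n = β
  t_vanish : ∀ n, VanishesFrom (t n) N
  u_vanish : ∀ n, VanishesFrom (u n) N

/-- The input of the correspondence in terms of row lengths: `a i j` is the multiplicity of the
biletter `(i, j)`, and `t n`, `u n` are the shapes formed by `μ` and the entries `≤ n` of `T`
and `U`. -/
@[ext]
structure ChainInput (α β : ℕ → ℕ) where
  a : ℕ → ℕ → ℕ
  t : ℕ → ℕ → ℕ
  u : ℕ → ℕ → ℕ
  a_eq_zero : ∀ i j, i = 0 ∨ j = 0 → a i j = 0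
  ht : IsHStripChain t
  hu : IsHStripChain u
  t_zero : t 0 = u 0
  bounded : ∃ N, InputBound α β a t u N

structure OutputBound (p q : ℕ → ℕ → ℕ) (N : ℕ) : Prop where
  p_eq_q : ∀ m n, N ≤ m → N ≤ n → p m = q n
  p_vanish : ∀ n, VanishesFrom (p n) N
  q_vanish : ∀ n, VanishesFrom (q n) N

@[ext]
structure ChainOutput (α β : ℕ → ℕ) where
  p : ℕ → ℕ → ℕ
  q : ℕ → ℕ → ℕ
  hp : IsHStripChain p
  hq : IsHStripChain q
  p_zero : p 0 = β
  q_zero : q 0 = α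
  bounded : ∃ N, OutputBound p q N

variable {α β : ℕ → ℕ}

theorem InputBound.mono {a t u : ℕ → ℕ → ℕ} {N N' : ℕ} (h : InputBound α β a t u N)
    (hN : N ≤ N') : InputBound α β a t u N' :=
  ⟨fun i j hij => h.a_eq_zero i j (by omega), fun n hn => h.t_eq n (hN.trans hn),
    fun n hn => h.u_eq n (hN.trans hn), fun n => (h.t_vanish n).mono hN,
    fun n => (h.u_vanish n).mono hN⟩

theorem InputBound.transpose {a t u : ℕ → ℕ → ℕ} {N : ℕ}
    (h : InputBound α β a t u N) : InputBound β α (fun i j => a j i) u t N :=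
  ⟨fun i j hij => h.a_eq_zero j i hij.symm, h.u_eq, h.t_eq, h.u_vanish, h.t_vanish⟩

namespace ChainInput

def transpose (c : ChainInput α β) : ChainInput β α where
  a i j := c.a j i
  t := c.u
  u := c.t
  a_eq_zero i j hij := c.a_eq_zero j i hij.symm
  ht := c.hu
  hu := c.ht
  t_zero := c.t_zero.symm
  bounded := c.bounded.imp fun _ => InputBound.transpose

/-- Fomin's growth diagram: `c.grid i j` is the shape obtained from the biletters `(i', j')`
with `i' ≤ i` and `j' ≤ j`, starting from `t` along `j = 0` and from `u` along `i = 0`. -/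
def grid (c : ChainInput α β) : ℕ → ℕ → ℕ → ℕ
  | 0, j => c.u j
  | i + 1, 0 => c.t (i + 1)
  | i + 1, j + 1 => grow (grid c i j) (grid c (i + 1) j) (grid c i (j + 1)) (c.a (i + 1) (j + 1))

variable (c : ChainInput α β)

theorem grid_zero_left (j : ℕ) : c.grid 0 j = c.u j := by rw [grid]

theorem grid_zero_right (i : ℕ) : c.grid i 0 = c.t i := by
  cases i with
  | zero => rw [grid, c.t_zero]
  | succ i => rw [grid]

theorem grid_succ_succ (i j : ℕ) : c.grid (i + 1) (j + 1) =
    grow (c.grid i j) (c.grid (i + 1) j) (c.grid i (j + 1)) (c.a (i + 1) (j + 1)) := by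
  rw [grid]

theorem grid_transpose (i j : ℕ) : c.transpose.grid j i = c.grid i j := by
  induction i generalizing j with
  | zero => rw [grid_zero_right, grid_zero_left]; rfl
  | succ i ih =>
    induction j with
    | zero => rw [grid_zero_left, grid_zero_right]; rfl
    | succ j ihj =>
      rw [grid_succ_succ, grid_succ_succ, ih, ihj, ih, grow_comm]
      rfl

theorem isHStrip_grid (i j : ℕ) :
    IsHStrip (c.grid i j) (c.grid (i + 1) j) ∧ IsHStrip (c.grid i j) (c.grid i (j + 1)) := by
  induction i generalizing j with
  | zero =>
    refine ⟨?_, by simpa only [grid_zero_left] using c.hu j⟩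
    induction j with
    | zero => rw [grid_zero_right, grid_zero_right]; exact c.ht 0
    | succ j ih =>
      rw [grid_succ_succ c 0 j]
      exact isHStrip_grow_right ih (by simpa only [grid_zero_left] using c.hu j)
  | succ i ih =>
    have right (j : ℕ) : IsHStrip (c.grid (i + 1) j) (c.grid (i + 1) (j + 1)) := by
      rw [grid_succ_succ c i j]; exact isHStrip_grow_left (ih j).1 (ih j).2
    refine ⟨?_, right j⟩
    induction j with
    | zero => rw [grid_zero_right, grid_zero_right]; exact c.ht (i + 1)
    | succ j ihj => rw [grid_succ_succ c (i + 1) j]; exact isHStrip_grow_right ihj (right j)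

theorem shrink_grid (i j : ℕ) :
    shrink (c.grid (i + 1) j) (c.grid i (j + 1)) (c.grid (i + 1) (j + 1)) = c.grid i j := by
  rw [grid_succ_succ]
  exact shrink_grow (c.isHStrip_grid i j).1 (c.isHStrip_grid i j).2

theorem shrinkMult_grid (i j : ℕ) :
    shrinkMult (c.grid (i + 1) j) (c.grid i (j + 1)) (c.grid (i + 1) (j + 1)) =
      c.a (i + 1) (j + 1) := by
  rw [grid_succ_succ, shrinkMult_grow]

variable {c} {N : ℕ} (hN : InputBound α β c.a c.t c.u N)
include hN

theorem vanishesFrom_grid (i j : ℕ) : VanishesFrom (c.grid i j) (N + i + j) := by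
  induction i generalizing j with
  | zero => rw [grid_zero_left]; exact (hN.u_vanish j).mono (by omega)
  | succ i ih =>
    induction j with
    | zero => rw [grid_zero_right]; exact (hN.t_vanish _).mono (by omega)
    | succ j ihj =>
      rw [grid_succ_succ]
      exact (vanishesFrom_grow ihj ((ih (j + 1)).mono (by omega))).mono (by omega)

theorem grid_eq_of_le_left {i : ℕ} (hi : N ≤ i) (j : ℕ) : c.grid i j = c.grid N j := by
  have step (i : ℕ) (hi : N ≤ i) (j : ℕ) : c.grid (i + 1) j = c.grid i j := by
    induction j with
    | zero => rw [grid_zero_right, grid_zero_right, hN.t_eq _ hi, hN.t_eq _ (by omega)]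
    | succ j ihj =>
      rw [grid_succ_succ, ihj, hN.a_eq_zero _ _ (Or.inl (by omega)),
        grow_self_left (c.isHStrip_grid i j).2]
  induction i, hi using Nat.le_induction with
  | base => rfl
  | succ i hi ih => rw [step i hi, ih]

theorem grid_eq_of_le_right {j : ℕ} (hj : N ≤ j) (i : ℕ) : c.grid i j = c.grid i N := by
  rw [← c.grid_transpose, ← c.grid_transpose]
  exact grid_eq_of_le_left (c := c.transpose) hN.transpose hj i

theorem grid_eq_grid_min (i j : ℕ) : c.grid i j = c.grid (min i N) (min j N) := by
  rcases le_total i N with hi | hi <;> rcases le_total j N with hj | hj <;>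
    simp only [min_eq_left, min_eq_right, hi, hj, grid_eq_of_le_left hN, grid_eq_of_le_right hN]

theorem sum_grid_succ_left {m j M : ℕ} (hM : N + m + j + 2 ≤ M) :
    ∑ i ∈ range M, c.grid (m + 1) j i + ∑ i ∈ range M, c.t m i =
      ∑ j' ∈ range (j + 1), c.a (m + 1) j' + ∑ i ∈ range M, c.t (m + 1) i +
        ∑ i ∈ range M, c.grid m j i := by
  induction j with
  | zero =>
    rw [grid_zero_right, grid_zero_right, sum_range_one, c.a_eq_zero _ _ (Or.inr rfl)]
    omega
  | succ j ih =>
    have hgrow := sum_grow (k := c.a (m + 1) (j + 1)) (c.isHStrip_grid m j).1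
      (c.isHStrip_grid m j).2 (vanishesFrom_grid hN (m + 1) j) (M := M) (by omega)
    rw [← grid_succ_succ] at hgrow
    rw [sum_range_succ]
    have := ih (by omega)
    omega

end ChainInput

namespace ChainInput

variable (c : ChainInput α β)

noncomputable def bound : ℕ := c.bounded.choose

theorem inputBound_bound : InputBound α β c.a c.t c.u c.bound := c.bounded.choose_spec

theorem outputBound_grid {N : ℕ} (hN : InputBound α β c.a c.t c.u N) :
    OutputBound (fun i => c.grid i N) (fun j => c.grid N j) (3 * N) where
  p_eq_q m n hm hn := by
    rw [grid_eq_of_le_left hN (i := m) (by omega), grid_eq_of_le_right hN (j := n) (by omega)]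
  p_vanish n := by
    show VanishesFrom (c.grid n N) _
    rw [grid_eq_grid_min hN]
    exact (vanishesFrom_grid hN _ _).mono (by omega)
  q_vanish n := by
    show VanishesFrom (c.grid N n) _
    rw [grid_eq_grid_min hN]
    exact (vanishesFrom_grid hN _ _).mono (by omega)

noncomputable def out : ChainOutput α β where
  p i := c.grid i c.bound
  q j := c.grid c.bound j
  hp i := (c.isHStrip_grid i c.bound).1
  hq j := (c.isHStrip_grid c.bound j).2
  p_zero := by rw [grid_zero_left, c.inputBound_bound.u_eq _ le_rfl]
  q_zero := by rw [grid_zero_right, c.inputBound_bound.t_eq _ le_rfl]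
  bounded := ⟨_, c.outputBound_grid c.inputBound_bound⟩

variable {c}

theorem grid_eq_of_inputBound {N N' : ℕ} (hN : InputBound α β c.a c.t c.u N)
    (hN' : InputBound α β c.a c.t c.u N') (i : ℕ) : c.grid i N = c.grid i N' := by
  rcases le_total N N' with h | h
  · exact (grid_eq_of_le_right hN h i).symm
  · exact grid_eq_of_le_right hN' h i

theorem out_p {N : ℕ} (hN : InputBound α β c.a c.t c.u N) (i : ℕ) : c.out.p i = c.grid i N :=
  grid_eq_of_inputBound c.inputBound_bound hN i

theorem out_q {N : ℕ} (hN : InputBound α β c.a c.t c.u N) (j : ℕ) :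
    c.out.q j = c.grid N j := by
  show c.grid c.bound j = _
  rw [← c.grid_transpose, ← c.grid_transpose]
  exact grid_eq_of_inputBound (c := c.transpose) c.inputBound_bound.transpose hN.transpose j

theorem transpose_out_p : c.transpose.out.p = c.out.q := by
  funext j
  rw [out_q c.transpose.inputBound_bound.transpose, ← c.grid_transpose]
  rfl

variable (c)

theorem sum_out_p_succ (n : ℕ) : ∀ᶠ M in atTop,
    ∑ i ∈ range M, c.out.p (n + 1) i + ∑ i ∈ range M, c.t n i =
      ∑ j ∈ range M, c.a (n + 1) j + ∑ i ∈ range M, c.t (n + 1) i +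
        ∑ i ∈ range M, c.out.p n i := by
  have hN := c.inputBound_bound
  have hrow : VanishesFrom (c.a (n + 1)) (c.bound + 1) :=
    fun j hj => hN.a_eq_zero _ _ (Or.inr (by omega))
  filter_upwards [eventually_ge_atTop (2 * c.bound + n + 2)] with M hM
  rw [hrow.sum_range_eq (by omega)]
  exact sum_grid_succ_left hN (by omega)

theorem sum_out_q_succ (n : ℕ) : ∀ᶠ M in atTop,
    ∑ j ∈ range M, c.out.q (n + 1) j + ∑ j ∈ range M, c.u n j =
      ∑ i ∈ range M, c.a i (n + 1) + ∑ j ∈ range M, c.u (n + 1) j +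
        ∑ j ∈ range M, c.out.q n j := by
  have h := c.transpose.sum_out_p_succ n
  rw [transpose_out_p] at h
  exact h

variable {c}

theorem ext_of_grid {c' : ChainInput α β} (h : ∀ i j, c.grid i j = c'.grid i j) : c = c' := by
  ext i j
  · rcases i with _ | i
    · rw [c.a_eq_zero _ _ (Or.inl rfl), c'.a_eq_zero _ _ (Or.inl rfl)]
    rcases j with _ | j
    · rw [c.a_eq_zero _ _ (Or.inr rfl), c'.a_eq_zero _ _ (Or.inr rfl)]
    rw [← shrinkMult_grid, ← shrinkMult_grid, h, h, h]
  · rw [← grid_zero_right, ← grid_zero_right, h]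
  · rw [← grid_zero_left, ← grid_zero_left, h]

theorem grid_eq_of_boundary {c' : ChainInput α β} {N : ℕ} (hN : InputBound α β c.a c.t c.u N)
    (hN' : InputBound α β c'.a c'.t c'.u N) (hright : ∀ i, c.grid i N = c'.grid i N)
    (htop : ∀ j, c.grid N j = c'.grid N j) (i j : ℕ) : c.grid i j = c'.grid i j := by
  suffices key :
      ∀ d e, d ≤ N → e ≤ N → c.grid (N - d) (N - e) = c'.grid (N - d) (N - e) by
    rw [grid_eq_grid_min hN, grid_eq_grid_min hN']
    have := key (N - min i N) (N - min j N) (by omega) (by omega)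
    rwa [Nat.sub_sub_self (min_le_right _ _), Nat.sub_sub_self (min_le_right _ _)] at this
  intro d
  induction d with
  | zero => intro e _ _; exact htop _
  | succ d ihd =>
    intro e hd
    induction e with
    | zero => intro _; exact hright _
    | succ e ihe =>
      intro he
      obtain ⟨i, hi, hi'⟩ : ∃ i, N - d = i + 1 ∧ N - (d + 1) = i :=
        ⟨N - d - 1, by omega, by omega⟩
      obtain ⟨j, hj, hj'⟩ : ∃ j, N - e = j + 1 ∧ N - (e + 1) = j :=
        ⟨N - e - 1, by omega, by omega⟩
      have h1 := ihd (e + 1) (by omega) he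
      have h2 := ihe (by omega)
      have h3 := ihd e (by omega) (by omega)
      rw [hi, hj'] at h1
      rw [hi', hj] at h2
      rw [hi, hj] at h3
      rw [hi', hj', ← c.shrink_grid, ← c'.shrink_grid, h1, h2, h3]

theorem out_injective : Function.Injective (out : ChainInput α β → ChainOutput α β) := by
  intro c c' h
  have hN := c.inputBound_bound.mono (le_max_left c.bound c'.bound)
  have hN' := c'.inputBound_bound.mono (le_max_right c.bound c'.bound)
  refine ext_of_grid (grid_eq_of_boundary hN hN' (fun i => ?_) (fun j => ?_))
  · rw [← out_p hN, ← out_p hN', h]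
  · rw [← out_q hN, ← out_q hN', h]

end ChainInput

theorem isHStripChain_comp_sub {r : ℕ → ℕ → ℕ} {N : ℕ}
    (hr : ∀ d, IsHStrip (r (d + 1)) (r d)) : IsHStripChain fun n => r (N - n) := by
  intro n
  rcases lt_or_ge n N with h | h
  · obtain ⟨d, hd, hd'⟩ : ∃ d, N - n = d + 1 ∧ N - (n + 1) = d :=
      ⟨N - n - 1, by omega, by omega⟩
    simp only [hd, hd']
    exact hr d
  · simp only [Nat.sub_eq_zero_of_le h, Nat.sub_eq_zero_of_le (Nat.le_succ_of_le h)]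
    exact IsHStrip.refl (hr 0).antitone_right

theorem OutputBound.p_min {p q : ℕ → ℕ → ℕ} {N : ℕ} (h : OutputBound p q N) (i : ℕ) :
    p (min i N) = p i := by
  rcases le_total i N with hi | hi
  · rw [min_eq_left hi]
  · rw [min_eq_right hi, h.p_eq_q N N le_rfl le_rfl, h.p_eq_q i N hi le_rfl]

theorem OutputBound.q_min {p q : ℕ → ℕ → ℕ} {N : ℕ} (h : OutputBound p q N) (j : ℕ) :
    q (min j N) = q j := by
  rcases le_total j N with hj | hj
  · rw [min_eq_left hj]
  · rw [min_eq_right hj, ← h.p_eq_q N N le_rfl le_rfl, h.p_eq_q N j le_rfl hj]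

/-- The backward growth diagram, in reversed coordinates: `backGrid p q N d e` is the shape at
`(N - d, N - e)`, computed by the backward local rule from `p` along `j = N` and `q` along
`i = N`. -/
def backGrid (p q : ℕ → ℕ → ℕ) (N : ℕ) : ℕ → ℕ → ℕ → ℕ
  | d, 0 => p (N - d)
  | 0, e + 1 => q (N - (e + 1))
  | d + 1, e + 1 => shrink (backGrid p q N d (e + 1)) (backGrid p q N (d + 1) e)
      (backGrid p q N d e)

section BackGrid

variable {p q : ℕ → ℕ → ℕ} {N : ℕ}

theorem backGrid_zero_right (d : ℕ) : backGrid p q N d 0 = p (N - d) := by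
  rw [backGrid]

theorem backGrid_zero_left (h : p N = q N) (e : ℕ) : backGrid p q N 0 e = q (N - e) := by
  cases e with
  | zero => rw [backGrid, Nat.sub_zero, h]
  | succ e => rw [backGrid]

theorem backGrid_succ_succ (d e : ℕ) : backGrid p q N (d + 1) (e + 1) =
    shrink (backGrid p q N d (e + 1)) (backGrid p q N (d + 1) e) (backGrid p q N d e) := by
  rw [backGrid]

theorem isHStrip_backGrid (hp : IsHStripChain p) (hq : IsHStripChain q) (h : p N = q N)
    (d e : ℕ) : IsHStrip (backGrid p q N (d + 1) e) (backGrid p q N d e) ∧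
      IsHStrip (backGrid p q N d (e + 1)) (backGrid p q N d e) := by
  have hqe (e : ℕ) : IsHStrip (backGrid p q N 0 (e + 1)) (backGrid p q N 0 e) := by
    rw [backGrid_zero_left h, backGrid_zero_left h, show N - (e + 1) = N - e - 1 by omega]
    exact hq.pred _
  have hpd (d : ℕ) : IsHStrip (backGrid p q N (d + 1) 0) (backGrid p q N d 0) := by
    rw [backGrid_zero_right, backGrid_zero_right, show N - (d + 1) = N - d - 1 by omega]
    exact hp.pred _
  induction d generalizing e with
  | zero =>
    refine ⟨?_, hqe e⟩
    induction e with
    | zero => exact hpd 0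
    | succ e ih => rw [backGrid_succ_succ]; exact isHStrip_shrink_left (hqe e) ih
  | succ d ih =>
    have left (e : ℕ) : IsHStrip (backGrid p q N (d + 1) (e + 1)) (backGrid p q N (d + 1) e) := by
      rw [backGrid_succ_succ]; exact isHStrip_shrink_right (ih e).2 (ih e).1
    refine ⟨?_, left e⟩
    induction e with
    | zero => exact hpd (d + 1)
    | succ e ihe => rw [backGrid_succ_succ (d + 1) e]; exact isHStrip_shrink_left (left e) ihe

theorem vanishesFrom_backGrid (hp : ∀ n, VanishesFrom (p n) N) (hq : ∀ n, VanishesFrom (q n) N)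
    (d e : ℕ) : VanishesFrom (backGrid p q N d e) N := by
  cases d <;> cases e <;> rw [backGrid]
  exacts [hp _, hq _, hp _, vanishesFrom_shrink (vanishesFrom_backGrid hp hq _ _)]

def backMat (p q : ℕ → ℕ → ℕ) (N i j : ℕ) : ℕ :=
  if 1 ≤ i ∧ i ≤ N ∧ 1 ≤ j ∧ j ≤ N then
    shrinkMult (backGrid p q N (N - i) (N - j + 1)) (backGrid p q N (N - i + 1) (N - j))
      (backGrid p q N (N - i) (N - j))
  else 0

theorem inputBound_backGrid (hp0 : p 0 = β) (hq0 : q 0 = α) (h : OutputBound p q N) :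
    InputBound α β (backMat p q N) (fun i => backGrid p q N (N - i) N)
      (fun j => backGrid p q N N (N - j)) N where
  a_eq_zero i j hij := if_neg (by omega)
  t_eq n hn := by
    simp only [Nat.sub_eq_zero_of_le hn]
    rw [backGrid_zero_left (h.p_eq_q N N le_rfl le_rfl), Nat.sub_self, hq0]
  u_eq n hn := by
    simp only [Nat.sub_eq_zero_of_le hn]
    rw [backGrid_zero_right, Nat.sub_self, hp0]
  t_vanish _ := vanishesFrom_backGrid h.p_vanish h.q_vanish _ _
  u_vanish _ := vanishesFrom_backGrid h.p_vanish h.q_vanish _ _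

end BackGrid

namespace ChainOutput

variable (y : ChainOutput α β)

noncomputable def bound : ℕ := y.bounded.choose

theorem outputBound_bound : OutputBound y.p y.q y.bound := y.bounded.choose_spec

theorem p_bound_eq_q_bound : y.p y.bound = y.q y.bound :=
  y.outputBound_bound.p_eq_q _ _ le_rfl le_rfl

noncomputable def input : ChainInput α β where
  a := backMat y.p y.q y.bound
  t i := backGrid y.p y.q y.bound (y.bound - i) y.bound
  u j := backGrid y.p y.q y.bound y.bound (y.bound - j)
  a_eq_zero i j h := if_neg (by omega)
  ht := isHStripChain_comp_sub (r := fun d => backGrid y.p y.q y.bound d y.bound)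
    fun d => (isHStrip_backGrid y.hp y.hq y.p_bound_eq_q_bound d _).1
  hu := isHStripChain_comp_sub (r := fun e => backGrid y.p y.q y.bound y.bound e)
    fun e => (isHStrip_backGrid y.hp y.hq y.p_bound_eq_q_bound _ e).2
  t_zero := rfl
  bounded := ⟨_, inputBound_backGrid y.p_zero y.q_zero y.outputBound_bound⟩

theorem grid_input {i j : ℕ} (hi : i ≤ y.bound) (hj : j ≤ y.bound) :
    y.input.grid i j = backGrid y.p y.q y.bound (y.bound - i) (y.bound - j) := by
  induction i generalizing j with
  | zero => rw [ChainInput.grid_zero_left]; rfl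
  | succ i ih =>
    induction j with
    | zero => rw [ChainInput.grid_zero_right]; rfl
    | succ j ihj =>
      obtain ⟨d, hd, hd'⟩ : ∃ d, y.bound - i = d + 1 ∧ y.bound - (i + 1) = d :=
        ⟨y.bound - i - 1, by omega, by omega⟩
      obtain ⟨e, he, he'⟩ : ∃ e, y.bound - j = e + 1 ∧ y.bound - (j + 1) = e :=
        ⟨y.bound - j - 1, by omega, by omega⟩
      have ha : y.input.a (i + 1) (j + 1) = shrinkMult (backGrid y.p y.q y.bound d (e + 1))
          (backGrid y.p y.q y.bound (d + 1) e) (backGrid y.p y.q y.bound d e) := by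
        show backMat _ _ _ _ _ = _
        rw [backMat, if_pos (by omega), hd', he', ← hd, ← he]
      rw [ChainInput.grid_succ_succ, ih (by omega) (by omega), ih (by omega) hj,
        ihj (by omega), ha, hd, hd', he, he', backGrid_succ_succ]
      have hB := isHStrip_backGrid y.hp y.hq y.p_bound_eq_q_bound d e
      exact grow_shrink hB.2 hB.1

theorem out_input : y.input.out = y := by
  have hN : InputBound α β y.input.a y.input.t y.input.u y.bound :=
    inputBound_backGrid y.p_zero y.q_zero y.outputBound_bound
  refine ChainOutput.ext (funext fun i => ?_) (funext fun j => ?_)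
  · rw [ChainInput.out_p hN, ChainInput.grid_eq_grid_min hN, min_self,
      grid_input _ (min_le_right _ _) le_rfl, Nat.sub_self, backGrid_zero_right,
      Nat.sub_sub_self (min_le_right _ _), y.outputBound_bound.p_min]
  · rw [ChainInput.out_q hN, ChainInput.grid_eq_grid_min hN, min_self,
      grid_input _ le_rfl (min_le_right _ _), Nat.sub_self,
      backGrid_zero_left y.p_bound_eq_q_bound, Nat.sub_sub_self (min_le_right _ _),
      y.outputBound_bound.q_min]

end ChainOutput

noncomputable def chainEquiv (α β : ℕ → ℕ) : ChainInput α β ≃ ChainOutput α β :=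
  Equiv.ofBijective ChainInput.out
    ⟨ChainInput.out_injective, fun y => ⟨y.input, y.out_input⟩⟩

theorem vanishesFrom_rowLen (μ : YoungDiagram) : VanishesFrom μ.rowLen (μ.colLen 0) := by
  intro i hi
  by_contra h
  have := YoungDiagram.mem_iff_lt_colLen.1 (YoungDiagram.mem_iff_lt_rowLen.2 (Nat.pos_of_ne_zero h))
  omega

theorem rowLen_le_rowLen {μ ν : YoungDiagram} (h : μ ≤ ν) (i : ℕ) :
    μ.rowLen i ≤ ν.rowLen i :=
  le_of_forall_lt fun _ hj =>
    YoungDiagram.mem_iff_lt_rowLen.1 (h (YoungDiagram.mem_iff_lt_rowLen.2 hj))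

theorem le_of_rowLen_le {μ ν : YoungDiagram} (h : ∀ i, μ.rowLen i ≤ ν.rowLen i) :
    μ ≤ ν := by
  rintro ⟨i, j⟩ hc
  exact YoungDiagram.mem_iff_lt_rowLen.2 ((YoungDiagram.mem_iff_lt_rowLen.1 hc).trans_le (h i))

theorem rowLen_injective : Function.Injective YoungDiagram.rowLen := fun _ _ h =>
  le_antisymm (le_of_rowLen_le fun i => (congrFun h i).le)
    (le_of_rowLen_le fun i => (congrFun h i).ge)

theorem card_cells_eq_sum_rowLen {μ : YoungDiagram} {M : ℕ} (hM : VanishesFrom μ.rowLen M) :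
    μ.cells.card = ∑ i ∈ range M, μ.rowLen i := by
  rw [card_eq_sum_card_fiberwise (f := Prod.fst) (t := range M)]
  · exact sum_congr rfl fun i _ => (μ.rowLen_eq_card).symm
  · rintro ⟨i, _⟩ hc
    by_contra hi
    have := hM i (by simpa using hi)
    have := YoungDiagram.mem_iff_lt_rowLen.1 ((YoungDiagram.mem_cells _).1 hc)
    omega

def diagramOfRowLen (f : ℕ → ℕ) (hf : Antitone f) (N : ℕ) (hN : VanishesFrom f N) :
    YoungDiagram where
  cells := (range N ×ˢ range (f 0)).filter fun c => c.2 < f c.1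
  isLowerSet := by
    rintro ⟨i, j⟩ ⟨i', j'⟩ ⟨hi, hj⟩ hc
    simp only [mem_coe, mem_filter, mem_product, mem_range] at hc ⊢
    have := hf (show i' ≤ i from hi)
    have := hf (Nat.zero_le i')
    refine ⟨⟨?_, by omega⟩, by omega⟩
    by_contra h
    have := hN i' (by omega)
    omega

theorem mem_diagramOfRowLen {f : ℕ → ℕ} {hf : Antitone f} {N : ℕ} {hN : VanishesFrom f N}
    {i j : ℕ} : (i, j) ∈ diagramOfRowLen f hf N hN ↔ j < f i := by
  rw [← YoungDiagram.mem_cells]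
  simp only [diagramOfRowLen, mem_filter, mem_product, mem_range, and_iff_right_iff_imp]
  intro h
  have := hf (Nat.zero_le i)
  refine ⟨?_, by omega⟩
  by_contra hi
  have := hN i (by omega)
  omega

theorem rowLen_diagramOfRowLen {f : ℕ → ℕ} {hf : Antitone f} {N : ℕ}
    {hN : VanishesFrom f N} : (diagramOfRowLen f hf N hN).rowLen = f :=
  funext fun _ => eq_of_forall_lt_iff fun _ => by
    rw [← YoungDiagram.mem_iff_lt_rowLen, mem_diagramOfRowLen]

theorem count_map_fst {s : Multiset (ℕ × ℕ)} {M : ℕ} (h : ∀ p ∈ s, p.2 < M) (n : ℕ) :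
    (s.map Prod.fst).count n = ∑ j ∈ range M, s.count (n, j) := by
  induction s using Multiset.induction_on with
  | empty => simp
  | cons p s ih =>
    rw [Multiset.map_cons, Multiset.count_cons, ih fun q hq => h q (Multiset.mem_cons_of_mem hq)]
    simp only [Multiset.count_cons, sum_add_distrib, Prod.ext_iff, sum_boole]
    have hp := h p (Multiset.mem_cons_self p s)
    by_cases hn : n = p.1
    · simp [hn, filter_eq', hp]
    · simp [hn]

theorem count_map_snd {s : Multiset (ℕ × ℕ)} {M : ℕ} (h : ∀ p ∈ s, p.1 < M) (n : ℕ) :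
    (s.map Prod.snd).count n = ∑ i ∈ range M, s.count (i, n) := by
  have hswap := count_map_fst (s := s.map Prod.swap) (M := M)
    (fun q hq => by obtain ⟨p, hp, rfl⟩ := Multiset.mem_map.1 hq; exact h p hp) n
  rw [Multiset.map_map, show Prod.fst ∘ Prod.swap = @Prod.snd ℕ ℕ from rfl] at hswap
  rw [hswap]
  exact sum_congr rfl fun i _ =>
    Multiset.count_map_eq_count' Prod.swap s Prod.swap_injective (i, n)

theorem exists_bound_biword (s : Multiset (ℕ × ℕ)) :
    ∃ N, ∀ p ∈ s, p.1 ≤ N ∧ p.2 ≤ N :=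
  ⟨(s.map fun p => p.1 + p.2).sup, fun p hp => by
    have := Multiset.le_sup (Multiset.mem_map_of_mem (fun p => p.1 + p.2) hp)
    omega⟩

/-- Only the entries of `a` in `[0, N] × [0, N]` are used. -/
noncomputable def biwordOfMatrix (a : ℕ → ℕ → ℕ) (N : ℕ) : Multiset (ℕ × ℕ) :=
  ∑ p ∈ range (N + 1) ×ˢ range (N + 1), Multiset.replicate (a p.1 p.2) p

theorem count_biwordOfMatrix {a : ℕ → ℕ → ℕ} {N : ℕ}
    (h : ∀ i j, N < i ∨ N < j → a i j = 0) (p : ℕ × ℕ) :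
    (biwordOfMatrix a N).count p = a p.1 p.2 := by
  rw [biwordOfMatrix, Multiset.count_sum']
  simp only [Multiset.count_replicate, sum_ite_eq', mem_product, mem_range]
  split_ifs with hp
  · rfl
  · exact (h p.1 p.2 (by omega)).symm

end SkewRSK

open SkewRSK

namespace SkewSSYT

variable {lam mu : YoungDiagram}

theorem ext {T T' : SkewSSYT lam mu} (h : T.entry = T'.entry) : T = T' := by
  cases T; cases T'; subst h; rfl

variable (T : SkewSSYT lam mu)

theorem entry_le_entry {i j i' j' : ℕ} (hi : i' ≤ i) (hj : j' ≤ j) (hc : (i, j) ∈ lam)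
    (hc' : (i', j') ∉ mu) : T.entry i' j' ≤ T.entry i j := by
  have hmid : (i', j) ∈ lam := lam.isLowerSet (Prod.mk_le_mk.2 ⟨hi, le_rfl⟩) hc
  have hmid' : (i', j) ∉ mu := fun h => hc' (mu.isLowerSet (Prod.mk_le_mk.2 ⟨le_rfl, hj⟩) h)
  have hrow : T.entry i' j' ≤ T.entry i' j := by
    rcases hj.lt_or_eq with hj | rfl
    · exact T.row_weak i' j' j hj (lam.isLowerSet (Prod.mk_le_mk.2 ⟨hi, hj.le⟩) hc) hc'
        hmid hmid'
    · exact le_rfl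
  have hcol : T.entry i' j ≤ T.entry i j := by
    rcases hi.lt_or_eq with hi | rfl
    · exact (T.col_strict i' i j hi hmid hmid' hc
        fun h => hmid' (mu.isLowerSet (Prod.mk_le_mk.2 ⟨hi.le, le_rfl⟩) h)).le
    · exact le_rfl
  exact hrow.trans hcol

def shapeLE (n : ℕ) : YoungDiagram where
  cells := mu.cells ∪ lam.cells.filter fun c => T.entry c.1 c.2 ≤ n
  isLowerSet := by
    rintro ⟨i, j⟩ ⟨i', j'⟩ hle hc
    simp only [mem_coe, Finset.mem_union, mem_filter, YoungDiagram.mem_cells] at hc ⊢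
    rcases hc with hc | ⟨hc, hn⟩
    · exact Or.inl (mu.isLowerSet hle hc)
    by_cases hc' : (i', j') ∈ mu
    · exact Or.inl hc'
    exact Or.inr ⟨lam.isLowerSet hle hc, (T.entry_le_entry hle.1 hle.2 hc hc').trans hn⟩

theorem mem_shapeLE {n i j : ℕ} :
    (i, j) ∈ T.shapeLE n ↔ (i, j) ∈ mu ∨ (i, j) ∈ lam ∧ T.entry i j ≤ n := by
  rw [← YoungDiagram.mem_cells]
  simp only [shapeLE, Finset.mem_union, mem_filter, YoungDiagram.mem_cells]

theorem shapeLE_mono {m n : ℕ} (h : m ≤ n) : T.shapeLE m ≤ T.shapeLE n := by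
  rintro ⟨i, j⟩ hc
  rw [mem_shapeLE] at hc ⊢
  exact hc.imp_right fun hc => ⟨hc.1, hc.2.trans h⟩

def chain (n : ℕ) : ℕ → ℕ := (T.shapeLE n).rowLen

theorem isHStripChain_chain : IsHStripChain T.chain := by
  refine fun n => ⟨rowLen_le_rowLen (T.shapeLE_mono n.le_succ), fun i => le_of_forall_lt ?_⟩
  intro j hj
  simp only [chain, ← YoungDiagram.mem_iff_lt_rowLen, mem_shapeLE] at hj ⊢
  have hii : (i, j) ≤ (i + 1, j) := Prod.mk_le_mk.2 ⟨i.le_succ, le_rfl⟩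
  rcases hj with hj | ⟨hj, hn⟩
  · exact Or.inl (mu.isLowerSet hii hj)
  by_cases hmu : (i, j) ∈ mu
  · exact Or.inl hmu
  by_cases hmu' : (i + 1, j) ∈ mu
  · exact Or.inl (mu.isLowerSet hii hmu')
  have := T.col_strict i (i + 1) j i.lt_succ_self (lam.isLowerSet hii hj) hmu hj hmu'
  exact Or.inr ⟨lam.isLowerSet hii hj, by omega⟩

theorem chain_zero : T.chain 0 = mu.rowLen := by
  refine congrArg YoungDiagram.rowLen (YoungDiagram.ext (Finset.ext fun ⟨i, j⟩ => ?_))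
  rw [YoungDiagram.mem_cells, YoungDiagram.mem_cells, mem_shapeLE]
  refine ⟨fun h => h.elim id fun h => ?_, Or.inl⟩
  by_contra hmu
  exact (T.pos i j h.1 hmu).not_ge h.2

theorem shapeLE_le (hμ : mu ≤ lam) (n : ℕ) : T.shapeLE n ≤ lam := by
  rintro ⟨i, j⟩ hc
  rw [mem_shapeLE] at hc
  exact hc.elim (fun h => hμ h) And.left

theorem eventually_chain_eq (hμ : mu ≤ lam) : ∀ᶠ n in atTop, T.chain n = lam.rowLen := by
  refine eventually_atTop.2 ⟨lam.cells.sup fun c => T.entry c.1 c.2, fun n hn =>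
    congrArg YoungDiagram.rowLen (le_antisymm (T.shapeLE_le hμ n) ?_)⟩
  rintro ⟨i, j⟩ hc
  rw [mem_shapeLE]
  exact Or.inr ⟨hc, (le_sup (f := fun c => T.entry c.1 c.2) hc).trans hn⟩

theorem vanishesFrom_chain (hμ : mu ≤ lam) {M : ℕ} (hM : VanishesFrom lam.rowLen M) (n : ℕ) :
    VanishesFrom (T.chain n) M :=
  hM.of_le (rowLen_le_rowLen (T.shapeLE_le hμ n))

theorem count_zero_entries : T.entries.count 0 = 0 := by
  rw [SkewSSYT.entries, Multiset.count_eq_zero]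
  intro h
  obtain ⟨⟨i, j⟩, hc, h0⟩ := Multiset.mem_map.1 h
  rw [Finset.mem_val, mem_sdiff, YoungDiagram.mem_cells, YoungDiagram.mem_cells] at hc
  exact (T.pos i j hc.1 hc.2).ne' h0

theorem count_succ_entries (hμ : mu ≤ lam) {M : ℕ} (hM : VanishesFrom lam.rowLen M) (n : ℕ) :
    T.entries.count (n + 1) =
      ∑ i ∈ range M, T.chain (n + 1) i - ∑ i ∈ range M, T.chain n i := by
  have hcells : (lam.cells \ mu.cells).filter (fun c => n + 1 = T.entry c.1 c.2) =
      (T.shapeLE (n + 1)).cells \ (T.shapeLE n).cells := by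
    ext ⟨i, j⟩
    have hval : n + 1 = T.entry i j ↔ T.entry i j ≤ n + 1 ∧ ¬T.entry i j ≤ n := by omega
    simp only [mem_filter, mem_sdiff, YoungDiagram.mem_cells, mem_shapeLE, hval]
    tauto
  rw [SkewSSYT.entries, Multiset.count_map, ← Finset.filter_val, ← Finset.card_def, hcells,
    card_sdiff_of_subset (T.shapeLE_mono n.le_succ),
    card_cells_eq_sum_rowLen (T.vanishesFrom_chain hμ hM _),
    card_cells_eq_sum_rowLen (T.vanishesFrom_chain hμ hM _)]
  rfl

theorem entry_le_iff_lt_chain (T : SkewSSYT lam mu) {i j : ℕ} (hc : (i, j) ∈ lam)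
    (hc' : (i, j) ∉ mu) (n : ℕ) : T.entry i j ≤ n ↔ j < T.chain n i := by
  rw [chain, ← YoungDiagram.mem_iff_lt_rowLen, mem_shapeLE]
  simp only [hc, hc', true_and, false_or]

theorem ext_of_chain {T T' : SkewSSYT lam mu} (h : T.chain = T'.chain) : T = T' := by
  refine ext (funext₂ fun i j => ?_)
  by_cases hc : (i, j) ∈ lam ∧ (i, j) ∉ mu
  · exact eq_of_forall_ge_iff fun n => by
      rw [T.entry_le_iff_lt_chain hc.1 hc.2, T'.entry_le_iff_lt_chain hc.1 hc.2, h]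
  · rw [T.zeros i j hc, T'.zeros i j hc]

section OfChain

variable {r : ℕ → ℕ → ℕ}

theorem le_rowLen_of_eventually_eq (hr : IsHStripChain r)
    (hfin : ∀ᶠ n in atTop, r n = lam.rowLen) (n i : ℕ) : r n i ≤ lam.rowLen i := by
  obtain ⟨N, hN⟩ := eventually_atTop.1 hfin
  exact (hr.le (le_max_left n N) i).trans (hN _ (le_max_right n N) ▸ le_rfl)

theorem exists_lt_of_eventually_eq (hfin : ∀ᶠ n in atTop, r n = lam.rowLen) {i j : ℕ}
    (hc : (i, j) ∈ lam) : ∃ n, j < r n i := by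
  obtain ⟨N, hN⟩ := eventually_atTop.1 hfin
  exact ⟨N, by rw [hN N le_rfl]; exact YoungDiagram.mem_iff_lt_rowLen.1 hc⟩

noncomputable def ofChainEntry (hfin : ∀ᶠ n in atTop, r n = lam.rowLen) (mu : YoungDiagram)
    (i j : ℕ) : ℕ :=
  if h : (i, j) ∈ lam ∧ (i, j) ∉ mu then Nat.find (exists_lt_of_eventually_eq hfin h.1) else 0

theorem ofChainEntry_le_iff (hr : IsHStripChain r) (hfin : ∀ᶠ n in atTop, r n = lam.rowLen)
    {i j : ℕ} (hc : (i, j) ∈ lam) (hc' : (i, j) ∉ mu) (n : ℕ) :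
    ofChainEntry hfin mu i j ≤ n ↔ j < r n i := by
  rw [ofChainEntry, dif_pos ⟨hc, hc'⟩, Nat.find_le_iff]
  exact ⟨fun ⟨m, hm, h⟩ => h.trans_le (hr.le hm i), fun h => ⟨n, le_rfl, h⟩⟩

theorem ofChainEntry_pos (hr : IsHStripChain r) (hfin : ∀ᶠ n in atTop, r n = lam.rowLen)
    (h0 : r 0 = mu.rowLen) {i j : ℕ} (hc : (i, j) ∈ lam) (hc' : (i, j) ∉ mu) :
    0 < ofChainEntry hfin mu i j :=
  Nat.pos_of_ne_zero fun h => hc' <| YoungDiagram.mem_iff_lt_rowLen.2 <|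
    h0 ▸ (ofChainEntry_le_iff hr hfin hc hc' 0).1 h.le

noncomputable def ofChain (hr : IsHStripChain r) (hfin : ∀ᶠ n in atTop, r n = lam.rowLen)
    (h0 : r 0 = mu.rowLen) : SkewSSYT lam mu where
  entry := ofChainEntry hfin mu
  pos i j := ofChainEntry_pos hr hfin h0
  zeros i j h := dif_neg h
  row_weak i j₁ j₂ hj h₁ h₁' h₂ h₂' := (ofChainEntry_le_iff hr hfin h₁ h₁' _).2
    (hj.trans ((ofChainEntry_le_iff hr hfin h₂ h₂' _).1 le_rfl))
  col_strict i₁ i₂ j hi h₁ h₁' h₂ h₂' := by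
    set n := ofChainEntry hfin mu i₂ j
    have hn := ofChainEntry_pos hr hfin h0 h₂ h₂'
    have hlt : j < r n i₂ := (ofChainEntry_le_iff hr hfin h₂ h₂' n).1 le_rfl
    have hrow : r n i₂ ≤ r n (i₁ + 1) := (hr n).antitone_left hi
    have hstrip : r n (i₁ + 1) ≤ r (n - 1) i₁ := (hr.pred n).succ_le i₁
    have := (ofChainEntry_le_iff hr hfin h₁ h₁' (n - 1)).2 (by omega)
    omega

theorem chain_ofChain (hr : IsHStripChain r) (hfin : ∀ᶠ n in atTop, r n = lam.rowLen)
    (h0 : r 0 = mu.rowLen) : (ofChain hr hfin h0).chain = r := by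
  funext n i
  refine eq_of_forall_lt_iff fun j => ?_
  rw [chain, ← YoungDiagram.mem_iff_lt_rowLen, mem_shapeLE]
  by_cases hmu : (i, j) ∈ mu
  · simp only [hmu, true_or, true_iff]
    exact (YoungDiagram.mem_iff_lt_rowLen.1 hmu).trans_le (h0 ▸ hr.le (Nat.zero_le n) i)
  by_cases hl : (i, j) ∈ lam
  · simp only [hmu, hl, false_or, true_and]
    exact ofChainEntry_le_iff hr hfin hl hmu n
  · simp only [hmu, hl, false_or, false_and, false_iff, not_lt]
    by_contra h
    exact hl (YoungDiagram.mem_iff_lt_rowLen.2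
      ((not_le.1 h).trans_le (le_rowLen_of_eventually_eq hr hfin n i)))

end OfChain

theorem entries_eq_add_entries {lam mu lam' mu' : YoungDiagram} {P : SkewSSYT lam mu}
    {T : SkewSSYT lam' mu'} (hμ : mu ≤ lam) (hμ' : mu' ≤ lam') {s : Multiset ℕ}
    (hs : 0 ∉ s)
    (h : ∀ n, ∀ᶠ M in atTop,
      ∑ i ∈ range M, P.chain (n + 1) i + ∑ i ∈ range M, T.chain n i =
        s.count (n + 1) + ∑ i ∈ range M, T.chain (n + 1) i + ∑ i ∈ range M, P.chain n i) :
    P.entries = s + T.entries := by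
  refine Multiset.ext.2 fun m => ?_
  rw [Multiset.count_add]
  cases m with
  | zero => rw [P.count_zero_entries, T.count_zero_entries, Multiset.count_eq_zero.2 hs]
  | succ n =>
    obtain ⟨M, hM, hlam, hlam'⟩ := ((h n).and ((eventually_ge_atTop (lam.colLen 0)).and
      (eventually_ge_atTop (lam'.colLen 0)))).exists
    rw [P.count_succ_entries hμ ((vanishesFrom_rowLen lam).mono hlam),
      T.count_succ_entries hμ' ((vanishesFrom_rowLen lam').mono hlam')]
    have hP := sum_le_sum fun i (_ : i ∈ range M) => (P.isHStripChain_chain n).le i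
    have hT := sum_le_sum fun i (_ : i ∈ range M) => (T.isHStripChain_chain n).le i
    omega

end SkewSSYT

namespace SkewRSKInput

variable {α β : YoungDiagram}

noncomputable def toChain (x : SkewRSKInput α β) :
    ChainInput α.rowLen β.rowLen where
  a i j := x.bw.count (i, j)
  t := x.T.chain
  u := x.U.chain
  a_eq_zero i j hij := Multiset.count_eq_zero.2 fun hm => by have := x.bw_pos _ hm; omega
  ht := x.T.isHStripChain_chain
  hu := x.U.isHStripChain_chain
  t_zero := by rw [x.T.chain_zero, x.U.chain_zero]
  bounded := by
    obtain ⟨Nw, hw⟩ := exists_bound_biword x.bw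
    obtain ⟨NT, hT⟩ := eventually_atTop.1 (x.T.eventually_chain_eq x.hμα)
    obtain ⟨NU, hU⟩ := eventually_atTop.1 (x.U.eventually_chain_eq x.hμβ)
    refine ⟨max (max Nw (max NT NU)) (max (α.colLen 0) (β.colLen 0)),
      fun i j hij => Multiset.count_eq_zero.2 fun hm => ?_, fun n hn => hT n (by omega),
      fun n hn => hU n (by omega), fun n => ?_, fun n => ?_⟩
    · have := hw _ hm; omega
    · exact (x.T.vanishesFrom_chain x.hμα (vanishesFrom_rowLen α) n).mono (by omega)
    · exact (x.U.vanishesFrom_chain x.hμβ (vanishesFrom_rowLen β) n).mono (by omega)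

theorem toChain_injective : Function.Injective (toChain : SkewRSKInput α β → _) := by
  rintro ⟨w, hw, μ, hμα, hμβ, T, U⟩ ⟨w', hw', μ', hμα', hμβ', T', U'⟩ h
  have ha := congrArg ChainInput.a h
  have ht : T.chain = T'.chain := congrArg ChainInput.t h
  have hu : U.chain = U'.chain := congrArg ChainInput.u h
  obtain rfl : w = w' := Multiset.ext.2 fun p => congrFun (congrFun ha p.1) p.2
  obtain rfl : μ = μ' := rowLen_injective (by rw [← T.chain_zero, ← T'.chain_zero, ht])
  obtain rfl := SkewSSYT.ext_of_chain ht
  obtain rfl := SkewSSYT.ext_of_chain hu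
  rfl

section

variable (x : SkewRSKInput α β)

theorem zero_notMem_map_fst : 0 ∉ x.bw.map Prod.fst := fun h => by
  obtain ⟨p, hp, h0⟩ := Multiset.mem_map.1 h
  exact (x.bw_pos p hp).1.ne' h0

theorem zero_notMem_map_snd : 0 ∉ x.bw.map Prod.snd := fun h => by
  obtain ⟨p, hp, h0⟩ := Multiset.mem_map.1 h
  exact (x.bw_pos p hp).2.ne' h0

theorem sum_out_p_succ (n : ℕ) : ∀ᶠ M in atTop,
    ∑ i ∈ range M, x.toChain.out.p (n + 1) i + ∑ i ∈ range M, x.T.chain n i =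
      (x.bw.map Prod.fst).count (n + 1) + ∑ i ∈ range M, x.T.chain (n + 1) i +
        ∑ i ∈ range M, x.toChain.out.p n i := by
  obtain ⟨N, hN⟩ := exists_bound_biword x.bw
  filter_upwards [x.toChain.sum_out_p_succ n, eventually_gt_atTop N] with M h hM
  rwa [count_map_fst fun p hp => (hN p hp).2.trans_lt hM]

theorem sum_out_q_succ (n : ℕ) : ∀ᶠ M in atTop,
    ∑ j ∈ range M, x.toChain.out.q (n + 1) j + ∑ j ∈ range M, x.U.chain n j =
      (x.bw.map Prod.snd).count (n + 1) + ∑ j ∈ range M, x.U.chain (n + 1) j +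
        ∑ j ∈ range M, x.toChain.out.q n j := by
  obtain ⟨N, hN⟩ := exists_bound_biword x.bw
  filter_upwards [x.toChain.sum_out_q_succ n, eventually_gt_atTop N] with M h hM
  rwa [count_map_snd fun p hp => (hN p hp).1.trans_lt hM]

end

end SkewRSKInput

namespace SkewRSK

variable {α β : YoungDiagram}

namespace ChainInput

variable (c : ChainInput α.rowLen β.rowLen)

noncomputable def innerShape : YoungDiagram :=
  diagramOfRowLen (c.t 0) (c.ht 0).antitone_left c.bound (c.inputBound_bound.t_vanish 0)

theorem t_zero_eq_rowLen : c.t 0 = c.innerShape.rowLen := rowLen_diagramOfRowLen.symm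

theorem u_zero_eq_rowLen : c.u 0 = c.innerShape.rowLen := c.t_zero ▸ c.t_zero_eq_rowLen

theorem eventually_t_eq : ∀ᶠ n in atTop, c.t n = α.rowLen :=
  eventually_atTop.2 ⟨c.bound, c.inputBound_bound.t_eq⟩

theorem eventually_u_eq : ∀ᶠ n in atTop, c.u n = β.rowLen :=
  eventually_atTop.2 ⟨c.bound, c.inputBound_bound.u_eq⟩

noncomputable def toSkewRSKInput : SkewRSKInput α β where
  bw := biwordOfMatrix c.a c.bound
  bw_pos p hp := by
    have hpos : 0 < c.a p.1 p.2 :=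
      count_biwordOfMatrix c.inputBound_bound.a_eq_zero p ▸ Multiset.count_pos.2 hp
    exact ⟨Nat.pos_of_ne_zero fun h0 => hpos.ne' (c.a_eq_zero _ _ (Or.inl h0)),
      Nat.pos_of_ne_zero fun h0 => hpos.ne' (c.a_eq_zero _ _ (Or.inr h0))⟩
  μ := c.innerShape
  hμα := le_of_rowLen_le <|
    c.ht.le_of_eq c.t_zero_eq_rowLen (c.inputBound_bound.t_eq _ le_rfl)
  hμβ := le_of_rowLen_le <|
    c.hu.le_of_eq c.u_zero_eq_rowLen (c.inputBound_bound.u_eq _ le_rfl)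
  T := SkewSSYT.ofChain c.ht c.eventually_t_eq c.t_zero_eq_rowLen
  U := SkewSSYT.ofChain c.hu c.eventually_u_eq c.u_zero_eq_rowLen

theorem toChain_toSkewRSKInput : c.toSkewRSKInput.toChain = c :=
  ChainInput.ext
    (funext₂ fun i j => count_biwordOfMatrix c.inputBound_bound.a_eq_zero (i, j))
    (SkewSSYT.chain_ofChain c.ht c.eventually_t_eq c.t_zero_eq_rowLen)
    (SkewSSYT.chain_ofChain c.hu c.eventually_u_eq c.u_zero_eq_rowLen)

end ChainInput

noncomputable def inputEquiv (α β : YoungDiagram) :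
    SkewRSKInput α β ≃ ChainInput α.rowLen β.rowLen :=
  Equiv.ofBijective SkewRSKInput.toChain
    ⟨SkewRSKInput.toChain_injective, fun c => ⟨c.toSkewRSKInput, c.toChain_toSkewRSKInput⟩⟩

end SkewRSK

namespace SkewRSKOutput

variable {α β : YoungDiagram}

noncomputable def toChain (y : SkewRSKOutput α β) : ChainOutput α.rowLen β.rowLen where
  p := y.P.chain
  q := y.Q.chain
  hp := y.P.isHStripChain_chain
  hq := y.Q.isHStripChain_chain
  p_zero := y.P.chain_zero
  q_zero := y.Q.chain_zero
  bounded := by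
    obtain ⟨NP, hP⟩ := eventually_atTop.1 (y.P.eventually_chain_eq y.hβlam)
    obtain ⟨NQ, hQ⟩ := eventually_atTop.1 (y.Q.eventually_chain_eq y.hαlam)
    refine ⟨max (max NP NQ) (y.lam.colLen 0), fun m n hm hn => ?_, fun n => ?_, fun n => ?_⟩
    · rw [hP m (by omega), hQ n (by omega)]
    · exact (y.P.vanishesFrom_chain y.hβlam (vanishesFrom_rowLen _) n).mono (by omega)
    · exact (y.Q.vanishesFrom_chain y.hαlam (vanishesFrom_rowLen _) n).mono (by omega)

theorem toChain_injective : Function.Injective (toChain : SkewRSKOutput α β → _) := by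
  rintro ⟨lam, hα, hβ, P, Q⟩ ⟨lam', hα', hβ', P', Q'⟩ h
  have hp : P.chain = P'.chain := congrArg ChainOutput.p h
  have hq : Q.chain = Q'.chain := congrArg ChainOutput.q h
  obtain ⟨N, hN⟩ := eventually_atTop.1 (P.eventually_chain_eq hβ)
  obtain ⟨N', hN'⟩ := eventually_atTop.1 (P'.eventually_chain_eq hβ')
  obtain rfl : lam = lam' := rowLen_injective <| by
    rw [← hN _ (le_max_left N N'), ← hN' _ (le_max_right N N'), hp]
  obtain rfl := SkewSSYT.ext_of_chain hp
  obtain rfl := SkewSSYT.ext_of_chain hq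
  rfl

end SkewRSKOutput

namespace SkewRSK

namespace ChainOutput

variable {α β : YoungDiagram} (y : ChainOutput α.rowLen β.rowLen)

noncomputable def outerShape : YoungDiagram :=
  diagramOfRowLen (y.p y.bound) (y.hp y.bound).antitone_left y.bound
    (y.outputBound_bound.p_vanish _)

theorem p_eq_rowLen {n : ℕ} (hn : y.bound ≤ n) : y.p n = y.outerShape.rowLen := by
  rw [outerShape, rowLen_diagramOfRowLen, y.outputBound_bound.p_eq_q n y.bound hn le_rfl,
    p_bound_eq_q_bound]

theorem q_eq_rowLen {n : ℕ} (hn : y.bound ≤ n) : y.q n = y.outerShape.rowLen := by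
  rw [← y.outputBound_bound.p_eq_q y.bound n le_rfl hn, y.p_eq_rowLen le_rfl]

theorem eventually_p_eq : ∀ᶠ n in atTop, y.p n = y.outerShape.rowLen :=
  eventually_atTop.2 ⟨y.bound, fun _ => y.p_eq_rowLen⟩

theorem eventually_q_eq : ∀ᶠ n in atTop, y.q n = y.outerShape.rowLen :=
  eventually_atTop.2 ⟨y.bound, fun _ => y.q_eq_rowLen⟩

noncomputable def toSkewRSKOutput : SkewRSKOutput α β where
  lam := y.outerShape
  hαlam := le_of_rowLen_le <| y.hq.le_of_eq y.q_zero (y.q_eq_rowLen le_rfl)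
  hβlam := le_of_rowLen_le <| y.hp.le_of_eq y.p_zero (y.p_eq_rowLen le_rfl)
  P := SkewSSYT.ofChain y.hp y.eventually_p_eq y.p_zero
  Q := SkewSSYT.ofChain y.hq y.eventually_q_eq y.q_zero

theorem toChain_toSkewRSKOutput : y.toSkewRSKOutput.toChain = y :=
  ChainOutput.ext (SkewSSYT.chain_ofChain y.hp y.eventually_p_eq y.p_zero)
    (SkewSSYT.chain_ofChain y.hq y.eventually_q_eq y.q_zero)

end ChainOutput

noncomputable def outputEquiv (α β : YoungDiagram) :
    SkewRSKOutput α β ≃ ChainOutput α.rowLen β.rowLen :=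
  Equiv.ofBijective SkewRSKOutput.toChain
    ⟨SkewRSKOutput.toChain_injective,
      fun y => ⟨y.toSkewRSKOutput, y.toChain_toSkewRSKOutput⟩⟩

end SkewRSK

/-- Sagan–Stanley: there is a bijection `((𝐢,𝐣), T, U) ↔ (P, Q)` such that the entries of
`P` are the first components of the biword together with the entries of `T`, and the
entries of `Q` are the second components of the biword together with the entries of `U`. -/
theorem skew_RSK_correspondence (α β : YoungDiagram) :
    ∃ e : SkewRSKInput α β ≃ SkewRSKOutput α β,
      ∀ x : SkewRSKInput α β,
        (e x).P.entries = Multiset.map Prod.fst x.bw + x.T.entries ∧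
        (e x).Q.entries = Multiset.map Prod.snd x.bw + x.U.entries := by
  let e := (inputEquiv α β).trans ((chainEquiv _ _).trans (outputEquiv α β).symm)
  refine ⟨e, fun x => ?_⟩
  have hout : (e x).toChain = x.toChain.out := (outputEquiv α β).apply_symm_apply _
  have hP : (e x).P.chain = x.toChain.out.p := congrArg ChainOutput.p hout
  have hQ : (e x).Q.chain = x.toChain.out.q := congrArg ChainOutput.q hout
  exact ⟨SkewSSYT.entries_eq_add_entries (e x).hβlam x.hμα x.zero_notMem_map_fst
      fun n => hP ▸ x.sum_out_p_succ n,
    SkewSSYT.entries_eq_add_entries (e x).hαlam x.hμβ x.zero_notMem_map_snd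
      fun n => hQ ▸ x.sum_out_q_succ n⟩
end

section
/- Let V be a nonzero finite-dimensional complex vector space carrying a Lie module structure over the Lie algebra sl(2,ℂ) of trace-zero 2×2 complex matrices, and let h_V denote the linear endomorphism of V given by the action of the element H = diag(1,−1) of sl(2,ℂ). Then: (a) every eigenvalue of h_V is an integer; (b) setting b_i := dim_ℂ of the eigenspace of h_V for the eigenvalue i (for i ∈ ℤ), one has b_i = b_{−i} for all i ∈ ℤ; and (c) b_{i+2} ≤ b_i for all integers i ≥ 0. Consequently, both the sequence (…, b_{−4}, b_{−2}, b_0, b_2, b_4, …) and the sequence (…, b_{−3}, b_{−1}, b_1, b_3, …) are symmetric and unimodal. -/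
/-!
Fix an `sl₂`-triple `(h, e, f)` acting on a finite-dimensional module. If `⁅h, m⁆ = μ • m` with
`m ≠ 0`, some `e ^ k m` is a primitive vector of weight `μ + 2 k`, which is a natural number;
so `μ` is an integer. The key fact is that `f ^ n` is injective on the `n`-eigenspace of `h` for
`n : ℕ`. Applied to the triples `(h, e, f)` and `(-h, f, e)` it gives `b n ≤ b (-n) ≤ b n`, and
since `f ^ (n + 2)` factors through `f`, the map `f` is injective on the `(n + 2)`-eigenspace,
whence `b (n + 2) ≤ b n`.
-/

open LieAlgebra.SpecialLinear FiniteDimensional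

/-- The element `H = diag(1, -1)` of `sl(2, ℂ)`. -/
def sl2H : sl (Fin 2) ℂ :=
  ⟨!![1, 0; 0, -1], show !![(1 : ℂ), 0; 0, -1] ∈ LinearMap.ker (Matrix.traceLinearMap (Fin 2) ℂ ℂ) by
    simp [LinearMap.mem_ker, Matrix.trace_fin_two]⟩

open LieModule Module

lemma Module.End.eigenspace_neg {R M : Type*} [CommRing R] [AddCommGroup M] [Module R M]
    (T : Module.End R M) (μ : R) : (-T).eigenspace μ = T.eigenspace (-μ) := by
  ext v
  simp only [Module.End.mem_eigenspace_iff, LinearMap.neg_apply, neg_smul, neg_eq_iff_eq_neg]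

lemma Submodule.finrank_le_finrank_of_mapsTo {K M : Type*} [DivisionRing K] [AddCommGroup M]
    [Module K M] [FiniteDimensional K M] {p q : Submodule K M} (T : M →ₗ[K] M)
    (hpq : ∀ x ∈ p, T x ∈ q) (hT : Disjoint p (LinearMap.ker T)) :
    finrank K p ≤ finrank K q := by
  refine LinearMap.finrank_le_finrank_of_injective (f := T.restrict hpq) fun x y hxy => ?_
  rw [← sub_eq_zero] at hxy ⊢
  exact Subtype.ext <| Submodule.disjoint_def.1 hT _ (sub_mem x.2 y.2)
    (by simpa using congrArg Subtype.val hxy)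

namespace IsSl2Triple

section CommRing

variable {R L M : Type*} [CommRing R] [LieRing L] [LieAlgebra R L]
  [AddCommGroup M] [Module R M] [LieRingModule L M] [LieModule R L M]
  {h e f : L} (t : IsSl2Triple h e f) {m : M} {μ : R}
include t

lemma lie_h_pow_toEnd_f (hm : ⁅h, m⁆ = μ • m) (n : ℕ) :
    ⁅h, (toEnd R L M f ^ n) m⁆ = (μ - 2 * n) • (toEnd R L M f ^ n) m := by
  have := t.symm.lie_h_pow_toEnd_e (R := R) (M := M) (μ := -μ) (by rw [neg_lie, hm, neg_smul]) n
  rw [neg_lie, neg_eq_iff_eq_neg, ← neg_smul] at this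
  rw [this]
  congr 1
  ring

lemma pow_toEnd_f_mem_eigenspace (hm : m ∈ (toEnd R L M h).eigenspace μ) (n : ℕ) :
    (toEnd R L M f ^ n) m ∈ (toEnd R L M h).eigenspace (μ - 2 * n) :=
  Module.End.mem_eigenspace_iff.2 (t.lie_h_pow_toEnd_f (Module.End.mem_eigenspace_iff.1 hm) n)

lemma lie_e_pow_succ_toEnd_f (hm : ⁅h, m⁆ = μ • m) (n : ℕ) :
    ⁅e, (toEnd R L M f ^ (n + 1)) m⁆ =
      (toEnd R L M f ^ (n + 1)) ⁅e, m⁆ + ((n + 1) * (μ - n)) • (toEnd R L M f ^ n) m := by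
  induction n with
  | zero =>
    simp only [zero_add, pow_one, toEnd_apply_apply, leibniz_lie e, t.lie_e_f, hm, Nat.cast_zero,
      sub_zero, one_mul, pow_zero, Module.End.one_apply]
    abel
  | succ n ih =>
    have lie_f (j : ℕ) (x : M) : ⁅f, (toEnd R L M f ^ j) x⁆ = (toEnd R L M f ^ (j + 1)) x := by
      simp [pow_succ']
    rw [← lie_f, leibniz_lie e, t.lie_e_f, t.lie_h_pow_toEnd_f hm, ih, lie_add, lie_smul, lie_f,
      lie_f]
    push_cast
    module

variable [IsDomain R] [CharZero R] [IsTorsionFree R M] [IsNoetherian R M]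

lemma exists_pow_toEnd_e_eq_zero (hm : ⁅h, m⁆ = μ • m) : ∃ k : ℕ, (toEnd R L M e ^ k) m = 0 := by
  by_contra! hne
  have hli := (toEnd R L M h).eigenvectors_linearIndependent' (fun k : ℕ => μ + 2 * k)
    (fun a b hab => by simpa using hab) _
    fun k => ⟨Module.End.mem_eigenspace_iff.2 (t.lie_h_pow_toEnd_e hm k), hne k⟩
  have := hli.finite_of_isNoetherian
  exact not_finite ℕ

lemma exists_hasPrimitiveVectorWith_pow_toEnd_e (hm : ⁅h, m⁆ = μ • m) (hm₀ : m ≠ 0) :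
    ∃ k : ℕ, t.HasPrimitiveVectorWith ((toEnd R L M e ^ k) m) (μ + 2 * k) := by
  obtain ⟨k, hk, hk₁⟩ := Nat.exists_not_and_succ_of_not_zero_of_exists (by simpa using hm₀)
    (t.exists_pow_toEnd_e_eq_zero hm)
  exact ⟨k, hk, t.lie_h_pow_toEnd_e hm k, by rwa [lie_e_pow_toEnd_e]⟩

lemma exists_int_eq_of_lie_h_eq_smul (hm : ⁅h, m⁆ = μ • m) (hm₀ : m ≠ 0) : ∃ n : ℤ, μ = n := by
  obtain ⟨k, P⟩ := t.exists_hasPrimitiveVectorWith_pow_toEnd_e hm hm₀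
  obtain ⟨n, hn⟩ := P.exists_nat
  exact ⟨n - 2 * k, by push_cast; linear_combination hn⟩

/-- Induction on the order of nilpotency of `e` at `m`: the vector `⁅e, m⁆` has weight `n + 2`
and is killed by `f ^ (n + 2)`, hence vanishes, and a primitive vector of weight `n` is not killed
by `f ^ n`. -/
lemma eq_zero_of_pow_toEnd_f_eq_zero {n : ℕ} (hm : ⁅h, m⁆ = (n : R) • m)
    (hf : (toEnd R L M f ^ n) m = 0) : m = 0 := by
  obtain ⟨k, hk⟩ := t.exists_pow_toEnd_e_eq_zero hm
  induction k generalizing n m with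
  | zero => simpa using hk
  | succ k ih =>
    have he : ⁅e, m⁆ = 0 := by
      refine ih (n := n + 2) ?_ ?_ (by rwa [pow_succ, Module.End.mul_apply] at hk)
      · simpa [two_mul, add_assoc] using t.lie_h_pow_toEnd_e hm 1
      · have hf₁ : (toEnd R L M f ^ (n + 1)) m = 0 := by
          rw [pow_succ', Module.End.mul_apply, hf, map_zero]
        have key := t.lie_e_pow_succ_toEnd_f hm n
        rw [hf₁, lie_zero, sub_self, mul_zero, zero_smul, add_zero] at key
        rw [show n + 2 = n + 1 + 1 by rfl, pow_succ', Module.End.mul_apply, ← key, map_zero]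
    by_contra hm₀
    exact (⟨hm₀, hm, he⟩ : t.HasPrimitiveVectorWith m (n : R)).pow_toEnd_f_ne_zero_of_eq_nat
      rfl le_rfl hf

end CommRing

section Field

variable {K L M : Type*} [Field K] [CharZero K] [LieRing L] [LieAlgebra K L]
  [AddCommGroup M] [Module K M] [FiniteDimensional K M] [LieRingModule L M] [LieModule K L M]
  {h e f : L} (t : IsSl2Triple h e f)
include t

lemma finrank_eigenspace_natCast_le_neg (n : ℕ) :
    finrank K ((toEnd K L M h).eigenspace n) ≤ finrank K ((toEnd K L M h).eigenspace (-n)) := by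
  refine Submodule.finrank_le_finrank_of_mapsTo (toEnd K L M f ^ n) (fun m hm => ?_)
    (Submodule.disjoint_def.2 fun m hm hfm =>
      t.eq_zero_of_pow_toEnd_f_eq_zero (R := K) (Module.End.mem_eigenspace_iff.1 hm) hfm)
  have := t.pow_toEnd_f_mem_eigenspace hm n
  rwa [show (n : K) - 2 * n = -n by ring] at this

lemma finrank_eigenspace_neg_natCast_le (n : ℕ) :
    finrank K ((toEnd K L M h).eigenspace (-n)) ≤ finrank K ((toEnd K L M h).eigenspace n) := by
  have := t.symm.finrank_eigenspace_natCast_le_neg (K := K) (M := M) n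
  rwa [map_neg, Module.End.eigenspace_neg, Module.End.eigenspace_neg, neg_neg] at this

lemma finrank_eigenspace_neg (μ : ℤ) :
    finrank K ((toEnd K L M h).eigenspace (-μ : K)) =
      finrank K ((toEnd K L M h).eigenspace μ) := by
  obtain ⟨n, rfl | rfl⟩ := Int.eq_nat_or_neg μ
  · rw [Int.cast_natCast]
    exact le_antisymm (t.finrank_eigenspace_neg_natCast_le n)
      (t.finrank_eigenspace_natCast_le_neg n)
  · rw [Int.cast_neg, neg_neg, Int.cast_natCast]
    exact le_antisymm (t.finrank_eigenspace_natCast_le_neg n)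
      (t.finrank_eigenspace_neg_natCast_le n)

lemma finrank_eigenspace_add_two_le (n : ℕ) :
    finrank K ((toEnd K L M h).eigenspace (n + 2)) ≤ finrank K ((toEnd K L M h).eigenspace n) := by
  refine Submodule.finrank_le_finrank_of_mapsTo (toEnd K L M f) (fun m hm => ?_)
    (Submodule.disjoint_def.2 fun m hm hfm =>
      t.eq_zero_of_pow_toEnd_f_eq_zero (R := K) (n := n + 2)
        (by exact_mod_cast Module.End.mem_eigenspace_iff.1 hm) ?_)
  · have := t.pow_toEnd_f_mem_eigenspace hm 1
    rwa [pow_one, show (n : K) + 2 - 2 * (1 : ℕ) = n by push_cast; ring] at this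
  · rw [pow_succ, Module.End.mul_apply, LinearMap.mem_ker.1 hfm, map_zero]

end Field

end IsSl2Triple

def sl2E : sl (Fin 2) ℂ :=
  ⟨!![0, 1; 0, 0], show !![(0 : ℂ), 1; 0, 0] ∈ LinearMap.ker (Matrix.traceLinearMap (Fin 2) ℂ ℂ) by
    simp [LinearMap.mem_ker, Matrix.trace_fin_two]⟩

def sl2F : sl (Fin 2) ℂ :=
  ⟨!![0, 0; 1, 0], show !![(0 : ℂ), 0; 1, 0] ∈ LinearMap.ker (Matrix.traceLinearMap (Fin 2) ℂ ℂ) by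
    simp [LinearMap.mem_ker, Matrix.trace_fin_two]⟩

lemma isSl2Triple_sl2H_sl2E_sl2F : IsSl2Triple sl2H sl2E sl2F where
  h_ne_zero h := by simpa [sl2H] using congrArg (fun x => x.val 0 0) h
  lie_e_f := by
    ext i j
    fin_cases i <;> fin_cases j <;> norm_num [sl2E, sl2F, sl2H, Ring.lie_def]
  lie_h_e_nsmul := by
    ext i j
    fin_cases i <;> fin_cases j <;> norm_num [sl2E, sl2H, Ring.lie_def]
  lie_h_f_nsmul := by
    ext i j
    fin_cases i <;> fin_cases j <;> norm_num [sl2F, sl2H, Ring.lie_def]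

theorem sl2_character_symmetric_unimodal_general
    (V : Type*) [AddCommGroup V] [Module ℂ V] [FiniteDimensional ℂ V]
    [LieRingModule (sl (Fin 2) ℂ) V] [LieModule ℂ (sl (Fin 2) ℂ) V]
    (h : Module.End ℂ V) (hh : h = LieModule.toEnd ℂ (sl (Fin 2) ℂ) V sl2H)
    (b : ℤ → ℕ) (hb : ∀ i : ℤ, b i = Module.finrank ℂ (Module.End.eigenspace h (i : ℂ))) :
    (∀ μ : ℂ, h.HasEigenvalue μ → ∃ k : ℤ, μ = (k : ℂ)) ∧
    (∀ i : ℤ, b i = b (-i)) ∧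
    (∀ i : ℤ, 0 ≤ i → b (i + 2) ≤ b i) := by
  subst hh
  have t := isSl2Triple_sl2H_sl2E_sl2F
  refine ⟨fun μ hμ => ?_, fun i => ?_, fun i hi => ?_⟩
  · obtain ⟨v, hv⟩ := hμ.exists_hasEigenvector
    have hv' := hv.apply_eq_smul
    rw [toEnd_apply_apply] at hv'
    exact t.exists_int_eq_of_lie_h_eq_smul hv' hv.2
  · rw [hb, hb, Int.cast_neg]
    exact (t.finrank_eigenspace_neg i).symm
  · lift i to ℕ using hi
    rw [hb, hb, Int.cast_add, Int.cast_natCast, Int.cast_ofNat]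
    exact t.finrank_eigenspace_add_two_le i

/-- For a nonzero finite-dimensional representation of `sl(2, ℂ)`: every eigenvalue of the
action of `H = diag(1, -1)` is an integer; the eigenvalue multiplicities `b_i` satisfy
`b_i = b_{-i}` (symmetry) and `b_{i+2} ≤ b_i` for `i ≥ 0` (unimodality on each parity). -/
theorem sl2_character_symmetric_unimodal
    (V : Type*) [AddCommGroup V] [Module ℂ V] [Nontrivial V] [FiniteDimensional ℂ V]
    [LieRingModule (sl (Fin 2) ℂ) V] [LieModule ℂ (sl (Fin 2) ℂ) V]
    (h : Module.End ℂ V) (hh : h = LieModule.toEnd ℂ (sl (Fin 2) ℂ) V sl2H)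
    (b : ℤ → ℕ) (hb : ∀ i : ℤ, b i = Module.finrank ℂ (Module.End.eigenspace h (i : ℂ))) :
    (∀ μ : ℂ, h.HasEigenvalue μ → ∃ k : ℤ, μ = (k : ℂ)) ∧
    (∀ i : ℤ, b i = b (-i)) ∧
    (∀ i : ℤ, 0 ≤ i → b (i + 2) ≤ b i) :=
  sl2_character_symmetric_unimodal_general V h hh b hb
end

section
/- Fix n ≥ 2 and a partition λ = (λ_1 > λ_2 > … > λ_{n−1} > λ_n = 0) with distinct parts. The map (w,T) ↦ σ(w,T), restricted to the set of admissible pairs (w,T) ∈ 𝒜(λ) such that w is the identity permutation and ℓ(w t_1 … t_i) = ℓ(w t_1 … t_{i−1}) + 1 for every i (i.e., the chain in Bruhat order is saturated), is a bijection onto the set SSYT_{[n]}(λ) of semistandard Young tableaux of shape λ with entries in {1,…,n}. -/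
/-!
Right multiplication by a transposition `(a b)` with `a < b` and `w a < w b` raises the
length by `1 + 2 #{a < d < b | w a < w d < w b}`, so a saturated chain is a sequence of
Bruhat covers. Along `Γ_{k,i} = ((i,k+1), …, (i,n))` such covers raise the value at
position `i` through values held beyond position `k`, never jumping over one; hence the
subword used is determined by the final value at `i`, and every admissible final value is
reached greedily. Running through `Γ_k = Γ_{k,k} ⋯ Γ_{k,1}` therefore turns a column that
increases on `{1, …, k}` into any entrywise larger increasing column, in exactly one way.
Column by column, these are the row-weak and column-strict conditions of a semistandard
tableau.
-/

/-- The conjugate partition: `conj n lam j` is the length `λ'_j` of the `j`-th column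
(`j` being `1`-indexed) of the partition `λ = (lam 0, lam 1, …)`. -/
def conj (n : ℕ) (lam : ℕ → ℕ) (j : ℕ) : ℕ :=
  ((Finset.range n).filter fun i => j ≤ lam i).card

/-- The sequence of transpositions `Γ_{k,i} = ((i, k+1), (i, k+2), …, (i, n))`
(all entries `1`-indexed). -/
def GammaKI (n k i : ℕ) : List (ℕ × ℕ) :=
  (List.range (n - k)).map fun d => (i, k + 1 + d)

/-- The sequence of transpositions `Γ_k = Γ_{k,k} Γ_{k,k-1} ⋯ Γ_{k,1}`. -/
def GammaK (n k : ℕ) : List (ℕ × ℕ) :=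
  ((List.range k).map fun d => GammaKI n k (k - d)).flatten

/-- Right multiplication of the permutation `w` by the transpositions listed in `ts`,
in order: `w t_1 t_2 ⋯ t_m`. -/
def applyT (w : Equiv.Perm ℕ) (ts : List (ℕ × ℕ)) : Equiv.Perm ℕ :=
  ts.foldl (fun u p => u * Equiv.swap p.1 p.2) w

/-- The length (number of inversions) of a permutation of `{1, …, n}`. -/
def len (n : ℕ) (w : Equiv.Perm ℕ) : ℕ :=
  (((Finset.Icc 1 n) ×ˢ (Finset.Icc 1 n)).filter fun p => p.1 < p.2 ∧ w p.2 < w p.1).card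

/-- An admissible pair `(w, T)` for the partition `λ = (lam 0, …, lam (n-1))`:
`w` is a permutation of `{1, …, n}` (a permutation of `ℕ` fixing everything outside
`{1, …, n}`), and `T = T_1 T_2 ⋯ T_{λ_1}` where `T_j` is a subword of `Γ_{λ'_j}`, such
that the lengths `ℓ(w t_1 ⋯ t_i)` strictly increase along the concatenation
`t_1, …, t_m` of the `T_j`. -/
structure AdmissiblePair (n : ℕ) (lam : ℕ → ℕ) where
  w : Equiv.Perm ℕ
  T : List (List (ℕ × ℕ))
  hw : ∀ i, i = 0 ∨ n < i → w i = i
  hT : T.length = lam 0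
  hsub : ∀ j < T.length, (T.getD j []).Sublist (GammaK n (conj n lam (j + 1)))
  hchain : ∀ i < T.flatten.length,
    len n (applyT w (T.flatten.take i)) < len n (applyT w (T.flatten.take (i + 1)))

/-- The permutation `π_j = w T_1 ⋯ T_j` associated with an admissible pair. -/
def piCol {n : ℕ} {lam : ℕ → ℕ} (a : AdmissiblePair n lam) (j : ℕ) : Equiv.Perm ℕ :=
  applyT a.w ((a.T.take j).flatten)

/-- The filling `σ(w, T)` of the Young diagram of `λ` associated with an admissible pair:
the `j`-th column contains `π_j(1), …, π_j(λ'_j)` from top to bottom (rows and columns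
are `1`-indexed; the value is `0` outside the diagram). -/
def sigmaOf {n : ℕ} {lam : ℕ → ℕ} (a : AdmissiblePair n lam) : ℕ → ℕ → ℕ :=
  fun r c => if 1 ≤ r ∧ 1 ≤ c ∧ r ≤ conj n lam c then piCol a c r else 0

/-- `σ` is (the indicator-extension of) a semistandard Young tableau of shape `λ` with
entries in `{1, …, n}`: entries vanish outside the diagram, lie in `{1, …, n}` on the
diagram, rows weakly increase and columns strictly increase. -/
def IsSSYT (n : ℕ) (lam : ℕ → ℕ) (σ : ℕ → ℕ → ℕ) : Prop :=
  (∀ r c, ¬(1 ≤ r ∧ 1 ≤ c ∧ r ≤ conj n lam c) → σ r c = 0) ∧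
  (∀ r c, 1 ≤ r → 1 ≤ c → r ≤ conj n lam c → 1 ≤ σ r c ∧ σ r c ≤ n) ∧
  (∀ r c, 1 ≤ r → 1 ≤ c → r ≤ conj n lam (c + 1) → σ r c ≤ σ r (c + 1)) ∧
  (∀ r c, 1 ≤ r → 1 ≤ c → r + 1 ≤ conj n lam c → σ r c < σ (r + 1) c)


@[simp] lemma applyT_nil (w : Equiv.Perm ℕ) : applyT w [] = w := rfl

@[simp] lemma applyT_cons (w : Equiv.Perm ℕ) (p : ℕ × ℕ) (ts : List (ℕ × ℕ)) :
    applyT w (p :: ts) = applyT (w * Equiv.swap p.1 p.2) ts := rfl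

lemma applyT_append (w : Equiv.Perm ℕ) (l₁ l₂ : List (ℕ × ℕ)) :
    applyT w (l₁ ++ l₂) = applyT (applyT w l₁) l₂ :=
  List.foldl_append

lemma applyT_apply_of_forall_ne {w : Equiv.Perm ℕ} {ts : List (ℕ × ℕ)} {d : ℕ}
    (h : ∀ p ∈ ts, p.1 ≠ d ∧ p.2 ≠ d) : applyT w ts d = w d := by
  induction ts generalizing w with
  | nil => rfl
  | cons p ts ih =>
    obtain ⟨h1, h2⟩ := h p List.mem_cons_self
    rw [applyT_cons, ih fun q hq => h q (List.mem_cons_of_mem _ hq), Equiv.Perm.mul_apply,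
      Equiv.swap_apply_of_ne_of_ne h1.symm h2.symm]

lemma mul_swap_apply_left {α : Type*} [DecidableEq α] (π : Equiv.Perm α) (a b : α) :
    (π * Equiv.swap a b) a = π b := by
  simp

def FixesOutside (n : ℕ) (w : Equiv.Perm ℕ) : Prop :=
  ∀ i, i = 0 ∨ n < i → w i = i

namespace FixesOutside

variable {n : ℕ} {w : Equiv.Perm ℕ}

lemma one : FixesOutside n 1 := fun _ _ => rfl

lemma apply_mem_Icc_iff (hw : FixesOutside n w) {r : ℕ} :
    w r ∈ Set.Icc 1 n ↔ r ∈ Set.Icc 1 n := by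
  simp only [Set.mem_Icc]
  by_cases hr : 1 ≤ r ∧ r ≤ n
  · refine iff_of_true ?_ hr
    by_contra h
    have hfix : w (w r) = w r := hw _ (by omega)
    rw [w.injective hfix] at h
    exact h hr
  · rw [hw r (by omega)]

lemma mul_swap (hw : FixesOutside n w) {a b : ℕ} (ha : a ∈ Set.Icc 1 n)
    (hb : b ∈ Set.Icc 1 n) : FixesOutside n (w * Equiv.swap a b) := by
  intro i hi
  rw [Set.mem_Icc] at ha hb
  rw [Equiv.Perm.mul_apply, Equiv.swap_apply_of_ne_of_ne (by omega) (by omega), hw i hi]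

lemma applyT (hw : FixesOutside n w) {ts : List (ℕ × ℕ)}
    (hts : ∀ p ∈ ts, p.1 ∈ Set.Icc 1 n ∧ p.2 ∈ Set.Icc 1 n) :
    FixesOutside n (_root_.applyT w ts) := by
  induction ts generalizing w with
  | nil => exact hw
  | cons p ts ih =>
    obtain ⟨h1, h2⟩ := hts p List.mem_cons_self
    exact ih (hw.mul_swap h1 h2) fun q hq => hts q (List.mem_cons_of_mem _ hq)

end FixesOutside

/-- `w ⋖ w · (a b)` in Bruhat order (for `a < b`). -/
def IsBruhatCover (w : Equiv.Perm ℕ) (a b : ℕ) : Prop :=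
  w a < w b ∧ ∀ d, a < d → d < b → ¬(w a < w d ∧ w d < w b)

def IsSaturatedChain : Equiv.Perm ℕ → List (ℕ × ℕ) → Prop
  | _, [] => True
  | w, t :: ts => IsBruhatCover w t.1 t.2 ∧ IsSaturatedChain (w * Equiv.swap t.1 t.2) ts

@[simp] lemma isSaturatedChain_nil (w : Equiv.Perm ℕ) : IsSaturatedChain w [] := trivial

@[simp] lemma isSaturatedChain_cons (w : Equiv.Perm ℕ) (t : ℕ × ℕ) (ts : List (ℕ × ℕ)) :
    IsSaturatedChain w (t :: ts) ↔
      IsBruhatCover w t.1 t.2 ∧ IsSaturatedChain (w * Equiv.swap t.1 t.2) ts :=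
  Iff.rfl

lemma isSaturatedChain_append (w : Equiv.Perm ℕ) (l₁ l₂ : List (ℕ × ℕ)) :
    IsSaturatedChain w (l₁ ++ l₂) ↔
      IsSaturatedChain w l₁ ∧ IsSaturatedChain (applyT w l₁) l₂ := by
  induction l₁ generalizing w with
  | nil => simp
  | cons p l ih => simp [ih, and_assoc]

lemma Finset.sum_sum_eq_of_eq_zero_off_pair {α M : Type*} [DecidableEq α] [AddCommMonoid M]
    {s : Finset α} {a b : α} (ha : a ∈ s) (hb : b ∈ s) (hab : a ≠ b) (F : α → α → M)
    (hF : ∀ x ∈ (s.erase a).erase b, ∀ y ∈ (s.erase a).erase b, F x y = 0) :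
    ∑ x ∈ s, ∑ y ∈ s, F x y =
      F a a + F a b + (F b a + F b b) +
        ∑ d ∈ (s.erase a).erase b, (F a d + F b d + (F d a + F d b)) := by
  have hsplit (f : α → M) : ∑ x ∈ s, f x = f a + f b + ∑ x ∈ (s.erase a).erase b, f x := by
      rw [← Finset.add_sum_erase s f ha,
        ← Finset.add_sum_erase _ f (Finset.mem_erase.2 ⟨hab.symm, hb⟩), add_assoc]
  have hrow : ∀ x ∈ (s.erase a).erase b, ∑ y ∈ s, F x y = F x a + F x b := fun x hx => by
    rw [hsplit, Finset.sum_eq_zero (hF x hx), add_zero]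
  rw [hsplit, hsplit (F a), hsplit (F b), Finset.sum_congr rfl hrow]
  simp only [Finset.sum_add_distrib]
  abel

lemma len_eq_sum (n : ℕ) (v : Equiv.Perm ℕ) :
    (len n v : ℤ) = ∑ x ∈ Finset.Icc 1 n, ∑ y ∈ Finset.Icc 1 n,
      if x < y ∧ v y < v x then 1 else 0 := by
  rw [len, Finset.card_filter, ← Finset.sum_product']
  push_cast
  rfl

lemma len_mul_swap {n : ℕ} (w : Equiv.Perm ℕ) {a b : ℕ} (ha : 1 ≤ a) (hab : a < b)
    (hbn : b ≤ n) (hw : w a < w b) :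
    (len n (w * Equiv.swap a b) : ℤ) =
      len n w + 1 + 2 * ((Finset.Ioo a b).filter fun d => w a < w d ∧ w d < w b).card := by
  set u := w * Equiv.swap a b
  have hua : u a = w b := by simp [u]
  have hub : u b = w a := by simp [u]
  have hud : ∀ d, d ≠ a → d ≠ b → u d = w d := fun d h1 h2 => by
    simp [u, Equiv.swap_apply_of_ne_of_ne h1 h2]
  clear_value u
  let isInv (v : Equiv.Perm ℕ) (x y : ℕ) : ℤ := if x < y ∧ v y < v x then 1 else 0
  set I := Finset.Icc 1 n
  set S := (I.erase a).erase b
  have hmemS : ∀ d ∈ S, d ≠ a ∧ d ≠ b := fun d hd => by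
    simp only [S, Finset.mem_erase] at hd
    exact ⟨hd.2.1, hd.1⟩
  set D : ℕ → ℕ → ℤ := fun x y => isInv u x y - isInv w x y
  have hSS : ∀ x ∈ S, ∀ y ∈ S, D x y = 0 := fun x hx y hy => by
    simp only [D, isInv, hud x (hmemS x hx).1 (hmemS x hx).2,
      hud y (hmemS y hy).1 (hmemS y hy).2, sub_self]
  have hcorner : D a a + D a b + (D b a + D b b) = 1 := by
    simp only [D, isInv, hua, hub]
    split_ifs <;> omega
  have hcross : ∀ d ∈ S, D a d + D b d + (D d a + D d b) =
      2 * if d ∈ Finset.Ioo a b ∧ w a < w d ∧ w d < w b then 1 else 0 := fun d hd => by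
    obtain ⟨hda, hdb⟩ := hmemS d hd
    have hwa : w d ≠ w a := fun h => hda (w.injective h)
    have hwb : w d ≠ w b := fun h => hdb (w.injective h)
    simp only [D, isInv, hua, hub, hud d hda hdb, Finset.mem_Ioo]
    clear hcorner hSS hua hub hud
    split_ifs <;> omega
  have hIoo : (Finset.Ioo a b).filter (fun d => w a < w d ∧ w d < w b) =
      S.filter fun d => d ∈ Finset.Ioo a b ∧ w a < w d ∧ w d < w b := by
    ext d
    simp only [S, I, Finset.mem_filter, Finset.mem_erase, Finset.mem_Icc, Finset.mem_Ioo]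
    exact ⟨fun h => ⟨⟨by omega, by omega, by omega, by omega⟩, h⟩, fun h => h.2⟩
  have hdiff := Finset.sum_sum_eq_of_eq_zero_off_pair (Finset.mem_Icc.2 ⟨ha, by omega⟩)
    (Finset.mem_Icc.2 ⟨by omega, hbn⟩) hab.ne D hSS
  rw [hcorner, Finset.sum_congr rfl hcross, ← Finset.mul_sum, ← Finset.sum_filter, ← hIoo,
    Finset.sum_const, nsmul_one] at hdiff
  simp only [D, Finset.sum_sub_distrib] at hdiff
  rw [len_eq_sum, len_eq_sum]
  linarith

lemma len_mul_swap_eq_succ_iff {n : ℕ} (w : Equiv.Perm ℕ) {a b : ℕ} (ha : 1 ≤ a)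
    (hab : a < b) (hbn : b ≤ n) :
    len n (w * Equiv.swap a b) = len n w + 1 ↔ IsBruhatCover w a b := by
  by_cases hw : w a < w b
  · have hlen := len_mul_swap w ha hab hbn hw
    rw [IsBruhatCover, and_iff_right hw]
    have hzero : len n (w * Equiv.swap a b) = len n w + 1 ↔
        ((Finset.Ioo a b).filter fun d => w a < w d ∧ w d < w b).card = 0 := by
      omega
    simp only [hzero, Finset.card_eq_zero, Finset.filter_eq_empty_iff, Finset.mem_Ioo, and_imp]
  · refine iff_of_false (fun h => ?_) fun h => hw h.1
    -- `w` is itself one swap above `w * (a b)`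
    have hlt : (w * Equiv.swap a b) a < (w * Equiv.swap a b) b := by
      have hne : w a ≠ w b := fun h => hab.ne (w.injective h)
      simp only [Equiv.Perm.mul_apply, Equiv.swap_apply_left, Equiv.swap_apply_right]
      omega
    have hlen := len_mul_swap (w * Equiv.swap a b) ha hab hbn hlt
    rw [mul_assoc, Equiv.swap_mul_self, mul_one] at hlen
    omega

lemma isSaturatedChain_iff_len_succ {n : ℕ} (w : Equiv.Perm ℕ) {ts : List (ℕ × ℕ)}
    (hts : ∀ p ∈ ts, 1 ≤ p.1 ∧ p.1 < p.2 ∧ p.2 ≤ n) :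
    IsSaturatedChain w ts ↔ ∀ i < ts.length,
      len n (applyT w (ts.take (i + 1))) = len n (applyT w (ts.take i)) + 1 := by
  induction ts generalizing w with
  | nil => simp
  | cons p ts ih =>
    obtain ⟨hp1, hp2, hp3⟩ := hts p List.mem_cons_self
    rw [isSaturatedChain_cons, ← len_mul_swap_eq_succ_iff w hp1 hp2 hp3,
      ih _ fun q hq => hts q (List.mem_cons_of_mem _ hq), List.length_cons, Nat.forall_lt_succ_left]
    simp [applyT]

section Subword

variable {π : Equiv.Perm ℕ} {i : ℕ}

lemma mem_of_sublist_map_pair {cs : List ℕ} {T : List (ℕ × ℕ)}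
    (hT : T.Sublist (cs.map (i, ·))) {p : ℕ × ℕ} (hp : p ∈ T) : p.1 = i ∧ p.2 ∈ cs := by
  obtain ⟨c, hc, rfl⟩ := List.mem_map.1 (hT.mem hp)
  exact ⟨rfl, hc⟩

lemma IsSaturatedChain.apply_le {ts : List (ℕ × ℕ)} (hts : ∀ p ∈ ts, p.1 = i)
    (h : IsSaturatedChain π ts) : π i ≤ applyT π ts i := by
  induction ts generalizing π with
  | nil => exact le_rfl
  | cons p ts ih =>
    obtain ⟨hcov, h⟩ := h
    have hp : p.1 = i := hts p List.mem_cons_self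
    have := ih (fun q hq => hts q (List.mem_cons_of_mem _ hq)) h
    rw [← hp, mul_swap_apply_left] at this
    rw [applyT_cons, ← hp]
    exact hcov.1.le.trans this

lemma IsSaturatedChain.apply_lt {ts : List (ℕ × ℕ)} {c : ℕ}
    (hts : ∀ p ∈ ts, p.1 = i ∧ c < p.2) (hic : i < c) (hc : π i < π c)
    (h : IsSaturatedChain π ts) : applyT π ts i < π c := by
  induction ts generalizing π with
  | nil => exact hc
  | cons p ts ih =>
    obtain ⟨hcov, h⟩ := h
    obtain ⟨rfl, hcp⟩ := hts p List.mem_cons_self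
    have hπc : (π * Equiv.swap p.1 p.2) c = π c := by
      rw [Equiv.Perm.mul_apply, Equiv.swap_apply_of_ne_of_ne hic.ne' hcp.ne]
    have hne : π p.2 ≠ π c := fun h => hcp.ne' (π.injective h)
    -- `(i, p.2)` is a cover, so `π c` does not lie strictly between `π i` and `π p.2`
    have hlt : π p.2 < π c :=
      lt_of_le_of_ne (not_lt.1 fun h' => hcov.2 c hic hcp ⟨hc, h'⟩) hne
    rw [applyT_cons, ← hπc]
    exact ih (fun q hq => hts q (List.mem_cons_of_mem _ hq))
      (by rw [mul_swap_apply_left, hπc]; exact hlt) h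

variable {cs : List ℕ} (hcs : cs.Pairwise (· < ·)) (hci : ∀ c ∈ cs, i < c)
include hcs hci

lemma eq_of_isSaturatedChain_of_applyT_eq {T T' : List (ℕ × ℕ)}
    (hT : T.Sublist (cs.map (i, ·))) (hT' : T'.Sublist (cs.map (i, ·)))
    (h : IsSaturatedChain π T) (h' : IsSaturatedChain π T')
    (hval : applyT π T i = applyT π T' i) : T = T' := by
  induction cs generalizing π T T' with
  | nil => rw [List.sublist_nil.1 hT, List.sublist_nil.1 hT']
  | cons c cs ih =>
    rw [List.pairwise_cons] at hcs
    have hic : i < c := hci c List.mem_cons_self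
    have hci' : ∀ c' ∈ cs, i < c' := fun c' hc' => hci c' (List.mem_cons_of_mem _ hc')
    -- a chain using `(i, c)` ends at least at `π c`, one skipping it stays below `π c`
    have taken : ∀ R, R.Sublist (cs.map (i, ·)) → IsSaturatedChain π ((i, c) :: R) →
        π c ≤ applyT π ((i, c) :: R) i := fun R hR hR' => by
      have := hR'.2.apply_le fun q hq => (mem_of_sublist_map_pair hR hq).1
      rwa [mul_swap_apply_left] at this
    have skipped : ∀ R, R.Sublist (cs.map (i, ·)) → IsSaturatedChain π R → π i < π c →
        applyT π R i < π c := fun R hR hR' hc =>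
      hR'.apply_lt (fun q hq => ⟨(mem_of_sublist_map_pair hR hq).1,
        hcs.1 _ (mem_of_sublist_map_pair hR hq).2⟩) hic hc
    simp only [List.map_cons, List.sublist_cons_iff] at hT hT'
    rcases hT with hT | ⟨R, rfl, hR⟩ <;> rcases hT' with hT' | ⟨R', rfl, hR'⟩
    · exact ih hcs.2 hci' hT hT' h h' hval
    · exact absurd hval ((skipped T hT h h'.1.1).trans_le (taken R' hR' h')).ne
    · exact absurd hval.symm ((skipped T' hT' h' h.1.1).trans_le (taken R hR h)).ne
    · rw [ih hcs.2 hci' hR hR' h.2 h'.2 hval]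

lemma exists_isSaturatedChain_applyT_eq {b : ℕ} (hb : π i ≤ b)
    (he : ∃ e, i ≤ e ∧ π e = b) (hout : ∀ d, i < d → d ∉ cs → ¬(π i < π d ∧ π d ≤ b)) :
    ∃ T, T.Sublist (cs.map (i, ·)) ∧ IsSaturatedChain π T ∧ applyT π T i = b := by
  induction cs generalizing π with
  | nil =>
    refine ⟨[], List.nil_sublist _, trivial, ?_⟩
    obtain ⟨e, hie, rfl⟩ := he
    rcases hie.lt_or_eq with hie | rfl
    · exact le_antisymm hb (not_lt.1 fun h => hout e hie List.not_mem_nil ⟨h, le_rfl⟩)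
    · rfl
  | cons c cs ih =>
    rw [List.pairwise_cons] at hcs
    have hic : i < c := hci c List.mem_cons_self
    have hci' : ∀ c' ∈ cs, i < c' := fun c' hc' => hci c' (List.mem_cons_of_mem _ hc')
    by_cases hc : π i < π c ∧ π c ≤ b
    · have hcov : IsBruhatCover π i c := by
        refine ⟨hc.1, fun d h1 h2 hd => hout d h1 ?_ ⟨hd.1, by omega⟩⟩
        rintro (_ | ⟨_, hd'⟩)
        exacts [h2.false, (hcs.1 d hd').not_gt h2]
      set π' := π * Equiv.swap i c
      have hπ'i : π' i = π c := mul_swap_apply_left π i c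
      have hπ'c : π' c = π i := by simp [π']
      have hπ'd : ∀ d, d ≠ i → d ≠ c → π' d = π d := fun d h1 h2 => by
        simp [π', Equiv.swap_apply_of_ne_of_ne h1 h2]
      have he' : ∃ e, i ≤ e ∧ π' e = b := by
        obtain ⟨e, hie, rfl⟩ := he
        by_cases hei : e = i
        · subst hei
          omega
        by_cases hec : e = c
        · exact ⟨i, le_rfl, hec ▸ hπ'i⟩
        · exact ⟨e, hie, hπ'd e hei hec⟩
      have hout' : ∀ d, i < d → d ∉ cs → ¬(π' i < π' d ∧ π' d ≤ b) := by
        intro d h1 h2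
        rw [hπ'i]
        by_cases hdc : d = c
        · rw [hdc, hπ'c]
          omega
        · rw [hπ'd d h1.ne' hdc]
          exact fun hd => hout d h1 (by simp [h2, hdc]) ⟨by omega, hd.2⟩
      obtain ⟨T, hT, hsat, hval⟩ := ih hcs.2 hci' (hπ'i ▸ hc.2) he' hout'
      exact ⟨(i, c) :: T, hT.cons_cons _, ⟨hcov, hsat⟩, hval⟩
    · have hout' : ∀ d, i < d → d ∉ cs → ¬(π i < π d ∧ π d ≤ b) := by
        intro d h1 h2
        by_cases hdc : d = c
        · exact hdc ▸ hc
        · exact hout d h1 (by simp [h2, hdc])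
      obtain ⟨T, hT, hsat, hval⟩ := ih hcs.2 hci' hb he hout'
      exact ⟨T, hT.trans (List.sublist_cons_self _ _), hsat, hval⟩

end Subword

lemma strictMonoOn_Icc_of_lt_add_one {f : ℕ → ℕ} {a b : ℕ}
    (h : ∀ r, a ≤ r → r + 1 ≤ b → f r < f (r + 1)) : StrictMonoOn f (Set.Icc a b) :=
  strictMonoOn_of_lt_succ Set.ordConnected_Icc fun r _ hr hr' => by
    rw [Order.succ_eq_add_one] at hr' ⊢
    exact h r hr.1 hr'.2

/-- `Γ_{k,i} Γ_{k,i-1} ⋯ Γ_{k,1}`; thus `Γ_k = gammaBlocks n k k`. -/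
def gammaBlocks (n k : ℕ) : ℕ → List (ℕ × ℕ)
  | 0 => []
  | i + 1 => GammaKI n k (i + 1) ++ gammaBlocks n k i

lemma gammaKI_eq_map (n k i : ℕ) :
    GammaKI n k i = (List.range' (k + 1) (n - k)).map (i, ·) := by
  rw [GammaKI, List.range'_eq_map_range, List.map_map]
  rfl

lemma gammaK_eq_gammaBlocks (n k : ℕ) : GammaK n k = gammaBlocks n k k := by
  suffices h : ∀ j, ((List.range j).map fun d => GammaKI n k (j - d)).flatten = gammaBlocks n k j
    from h k
  intro j
  induction j with
  | zero => rfl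
  | succ j ih =>
    rw [List.range_succ_eq_map, List.map_cons, List.map_map, List.flatten_cons, gammaBlocks, ← ih]
    congr 2
    exact List.map_congr_left fun d _ => by
      simp only [Function.comp_apply, Nat.succ_eq_add_one, Nat.add_sub_add_right]

lemma mem_gammaBlocks {n k i : ℕ} {p : ℕ × ℕ} (hp : p ∈ gammaBlocks n k i) :
    1 ≤ p.1 ∧ p.1 ≤ i ∧ k < p.2 ∧ p.2 ≤ n := by
  induction i with
  | zero => simp [gammaBlocks] at hp
  | succ i ih =>
    rw [gammaBlocks, List.mem_append, gammaKI_eq_map, List.mem_map] at hp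
    rcases hp with ⟨c, hc, rfl⟩ | hp
    · rw [List.mem_range'_1] at hc
      exact ⟨by omega, le_rfl, by omega, by omega⟩
    · obtain ⟨h1, h2, h3⟩ := ih hp
      exact ⟨h1, by omega, h3⟩

lemma mem_gammaK {n k : ℕ} {p : ℕ × ℕ} (hp : p ∈ GammaK n k) :
    1 ≤ p.1 ∧ p.1 < p.2 ∧ p.2 ≤ n := by
  rw [gammaK_eq_gammaBlocks] at hp
  obtain ⟨h1, h2, h3, h4⟩ := mem_gammaBlocks hp
  exact ⟨h1, by omega, h4⟩

section Column

variable {n k i : ℕ} {ρ : Equiv.Perm ℕ}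

lemma mem_of_sublist_gammaKI {X : List (ℕ × ℕ)} (hX : X.Sublist (GammaKI n k i))
    {p : ℕ × ℕ} (hp : p ∈ X) : p.1 = i ∧ k < p.2 ∧ p.2 ≤ n := by
  rw [gammaKI_eq_map] at hX
  obtain ⟨h1, h2⟩ := mem_of_sublist_map_pair hX hp
  rw [List.mem_range'_1] at h2
  exact ⟨h1, by omega, by omega⟩

lemma applyT_apply_of_sublist_gammaKI {X : List (ℕ × ℕ)} (hX : X.Sublist (GammaKI n k i))
    {d : ℕ} (hd : d ≤ k) (hne : d ≠ i) : applyT ρ X d = ρ d :=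
  applyT_apply_of_forall_ne fun p hp => by
    obtain ⟨h1, h2, -⟩ := mem_of_sublist_gammaKI hX hp
    exact ⟨h1 ▸ hne.symm, by omega⟩

lemma le_applyT_and_strictMonoOn {T : List (ℕ × ℕ)} (hT : T.Sublist (gammaBlocks n k i))
    (hsat : IsSaturatedChain ρ T) (hρ : StrictMonoOn ρ (Set.Icc 1 k)) :
    (∀ r ∈ Set.Icc 1 k, ρ r ≤ applyT ρ T r) ∧
      StrictMonoOn (applyT ρ T) (Set.Icc 1 k) := by
  induction i generalizing ρ T with
  | zero =>
    rw [gammaBlocks, List.sublist_nil] at hT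
    subst hT
    exact ⟨fun r _ => le_rfl, hρ⟩
  | succ i ih =>
    rw [gammaBlocks, List.sublist_append_iff] at hT
    obtain ⟨X, Y, rfl, hX, hY⟩ := hT
    rw [isSaturatedChain_append] at hsat
    have hle : ρ (i + 1) ≤ applyT ρ X (i + 1) :=
      hsat.1.apply_le fun p hp => (mem_of_sublist_gammaKI hX hp).1
    have hmono : StrictMonoOn (applyT ρ X) (Set.Icc 1 k) :=
      strictMonoOn_Icc_of_lt_add_one fun r h1 h2 => by
        have hρr := hρ ⟨h1, by omega⟩ ⟨by omega, h2⟩ (Nat.lt_succ_self r)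
        by_cases hr : r = i + 1
        · subst hr
          rw [applyT_apply_of_sublist_gammaKI hX h2 (by omega)]
          refine hsat.1.apply_lt (fun p hp => ?_) (Nat.lt_succ_self _) hρr
          obtain ⟨h1, h2, -⟩ := mem_of_sublist_gammaKI hX hp
          exact ⟨h1, by omega⟩
        · rw [applyT_apply_of_sublist_gammaKI hX (by omega) hr]
          by_cases hr' : r + 1 = i + 1
          · exact hρr.trans_le (hr' ▸ hle)
          · rwa [applyT_apply_of_sublist_gammaKI hX h2 hr']
    obtain ⟨ih1, ih2⟩ := ih hY hsat.2 hmono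
    rw [applyT_append]
    refine ⟨fun r hr => le_trans ?_ (ih1 r hr), ih2⟩
    by_cases h : r = i + 1
    · exact h ▸ hle
    · rw [applyT_apply_of_sublist_gammaKI hX hr.2 h]

lemma eq_of_sublist_gammaBlocks_of_applyT_eq (hik : i ≤ k) {T T' : List (ℕ × ℕ)}
    (hT : T.Sublist (gammaBlocks n k i)) (hT' : T'.Sublist (gammaBlocks n k i))
    (hsat : IsSaturatedChain ρ T) (hsat' : IsSaturatedChain ρ T')
    (hval : ∀ r ∈ Set.Icc 1 i, applyT ρ T r = applyT ρ T' r) : T = T' := by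
  induction i generalizing ρ T T' with
  | zero =>
    rw [gammaBlocks, List.sublist_nil] at hT hT'
    rw [hT, hT']
  | succ i ih =>
    rw [gammaBlocks, List.sublist_append_iff, gammaKI_eq_map] at hT hT'
    obtain ⟨X, Y, rfl, hX, hY⟩ := hT
    obtain ⟨X', Y', rfl, hX', hY'⟩ := hT'
    rw [isSaturatedChain_append] at hsat hsat'
    have hfix : ∀ Z, Z.Sublist (gammaBlocks n k i) → ∀ τ, applyT τ Z (i + 1) = τ (i + 1) :=
      fun Z hZ τ => applyT_apply_of_forall_ne fun p hp => by
        obtain ⟨-, h2, h3, -⟩ := mem_gammaBlocks (hZ.mem hp)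
        constructor <;> omega
    have hXX' : X = X' := by
      refine eq_of_isSaturatedChain_of_applyT_eq List.pairwise_lt_range'
        (fun c hc => by rw [List.mem_range'_1] at hc; omega) hX hX' hsat.1 hsat'.1 ?_
      simpa only [applyT_append, hfix Y hY, hfix Y' hY'] using hval (i + 1) ⟨by omega, le_rfl⟩
    subst hXX'
    rw [ih (by omega) hY hY' hsat.2 hsat'.2 fun r hr => by
      simpa only [applyT_append] using hval r ⟨hr.1, hr.2.trans i.le_succ⟩]

variable (hρ : FixesOutside n ρ) {b : ℕ → ℕ} (hb : StrictMonoOn b (Set.Icc 1 k))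
  (hbn : ∀ r ∈ Set.Icc 1 k, b r ∈ Set.Icc 1 n)
include hρ hb hbn

lemma exists_sublist_gammaKI_applyT_eq (hi : i ∈ Set.Icc 1 k)
    (hle : ∀ r ∈ Set.Icc 1 i, ρ r ≤ b r) (heq : ∀ r ∈ Set.Icc (i + 1) k, ρ r = b r) :
    ∃ X, X.Sublist (GammaKI n k i) ∧ IsSaturatedChain ρ X ∧ applyT ρ X i = b i := by
  obtain ⟨hi1, hik⟩ := hi
  have hbi := hbn i ⟨hi1, hik⟩
  have he : ∃ e, i ≤ e ∧ ρ e = b i := by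
    obtain ⟨e, hρe⟩ := ρ.surjective (b i)
    refine ⟨e, not_lt.1 fun hlt => ?_, hρe⟩
    have he : e ∈ Set.Icc 1 n := hρ.apply_mem_Icc_iff.1 (hρe ▸ hbi)
    have := hle e ⟨he.1, hlt.le⟩
    have := hb ⟨he.1, by omega⟩ ⟨hi1, hik⟩ hlt
    omega
  have hout : ∀ d, i < d → d ∉ List.range' (k + 1) (n - k) → ¬(ρ i < ρ d ∧ ρ d ≤ b i) := by
    intro d hd hdk
    rw [List.mem_range'_1] at hdk
    by_cases hdk' : d ≤ k
    · have := heq d ⟨hd, hdk'⟩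
      have := hb ⟨hi1, hik⟩ ⟨by omega, hdk'⟩ hd
      omega
    · have := hρ d (Or.inr (by omega))
      have := hbi.2
      omega
  rw [gammaKI_eq_map]
  exact exists_isSaturatedChain_applyT_eq List.pairwise_lt_range'
    (fun c hc => by rw [List.mem_range'_1] at hc; omega) (hle i ⟨hi1, le_rfl⟩) he hout

lemma exists_sublist_gammaBlocks_applyT_eq (hik : i ≤ k)
    (hle : ∀ r ∈ Set.Icc 1 i, ρ r ≤ b r) (heq : ∀ r ∈ Set.Icc (i + 1) k, ρ r = b r) :
    ∃ T, T.Sublist (gammaBlocks n k i) ∧ IsSaturatedChain ρ T ∧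
      ∀ r ∈ Set.Icc 1 k, applyT ρ T r = b r := by
  induction i generalizing ρ with
  | zero => exact ⟨[], List.nil_sublist _, trivial, heq⟩
  | succ i ih =>
    obtain ⟨X, hX, hXsat, hXval⟩ :=
      exists_sublist_gammaKI_applyT_eq hρ hb hbn ⟨by omega, hik⟩ hle heq
    have hρX : FixesOutside n (applyT ρ X) := hρ.applyT fun p hp => by
      obtain ⟨h1, h2, h3⟩ := mem_of_sublist_gammaKI hX hp
      exact ⟨⟨by omega, by omega⟩, ⟨by omega, h3⟩⟩
    obtain ⟨Y, hY, hYsat, hYval⟩ := ih hρX (by omega)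
      (fun r ⟨hr1, hr2⟩ => by
        rw [applyT_apply_of_sublist_gammaKI hX (by omega) (by omega)]
        exact hle r ⟨hr1, by omega⟩)
      (fun r ⟨hr1, hr2⟩ => by
        by_cases h : r = i + 1
        · rw [h, hXval]
        · rw [applyT_apply_of_sublist_gammaKI hX hr2 h]
          exact heq r ⟨by omega, hr2⟩)
    refine ⟨X ++ Y, hX.append hY, (isSaturatedChain_append ρ X Y).2 ⟨hXsat, hYsat⟩, ?_⟩
    simpa only [applyT_append] using hYval

end Column

lemma le_apply_of_strictMonoOn_Icc {f : ℕ → ℕ} {K : ℕ} (hf : StrictMonoOn f (Set.Icc 1 K))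
    (h1 : 1 ≤ f 1) : ∀ r ∈ Set.Icc 1 K, r ≤ f r := by
  rintro r ⟨hr1, hrK⟩
  induction r with
  | zero => omega
  | succ r ih =>
    rcases Nat.eq_zero_or_pos r with rfl | hr
    · exact h1
    · have := hf ⟨hr, by omega⟩ ⟨hr1, hrK⟩ (Nat.lt_succ_self r)
      have := ih hr (by omega)
      omega

/-- `T = T_1 T_2 ⋯ T_m` with `T_j` a subword of `Γ_{k_j}`; for `k = λ'` these are the subwords
of the `λ`-chain. -/
def IsLambdaSubword (n : ℕ) (k : ℕ → ℕ) (T : List (List (ℕ × ℕ))) : Prop :=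
  ∀ j < T.length, (T.getD j []).Sublist (GammaK n (k (j + 1)))

lemma take_succ_eq_append_getD (T : List (List (ℕ × ℕ))) {j : ℕ} (hj : j < T.length) :
    T.take (j + 1) = T.take j ++ [T.getD j []] := by
  rw [List.take_add_one, List.getElem?_eq_getElem hj]
  simp [List.getD_eq_getElem?_getD, List.getElem?_eq_getElem hj]

lemma flatten_take_succ (T : List (List (ℕ × ℕ))) {j : ℕ} (hj : j < T.length) :
    (T.take (j + 1)).flatten = (T.take j).flatten ++ T.getD j [] := by
  rw [take_succ_eq_append_getD T hj, List.flatten_append, List.flatten_singleton]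

lemma IsSaturatedChain.getD {w : Equiv.Perm ℕ} {T : List (List (ℕ × ℕ))}
    (h : IsSaturatedChain w T.flatten) {j : ℕ} (hj : j < T.length) :
    IsSaturatedChain (applyT w (T.take j).flatten) (T.getD j []) := by
  rw [← List.take_append_drop (j + 1) T, List.flatten_append, isSaturatedChain_append,
    flatten_take_succ T hj, isSaturatedChain_append] at h
  exact h.1.2

namespace IsLambdaSubword

variable {n : ℕ} {k : ℕ → ℕ} {T : List (List (ℕ × ℕ))}

lemma mem_flatten (hT : IsLambdaSubword n k T) :
    ∀ p ∈ T.flatten, 1 ≤ p.1 ∧ p.1 < p.2 ∧ p.2 ≤ n := fun p hp => by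
  obtain ⟨l, hl, hpl⟩ := List.mem_flatten.1 hp
  obtain ⟨j, hj, rfl⟩ := List.getElem_of_mem hl
  refine mem_gammaK ((hT j hj).mem ?_)
  rwa [List.getD_eq_getElem?_getD, List.getElem?_eq_getElem hj, Option.getD_some]

lemma fixesOutside (hT : IsLambdaSubword n k T) (j : ℕ) :
    FixesOutside n (applyT 1 (T.take j).flatten) :=
  FixesOutside.one.applyT fun p hp => by
    obtain ⟨h1, h2, h3⟩ := hT.mem_flatten p ((List.take_sublist j T).flatten.mem hp)
    exact ⟨⟨h1, by omega⟩, ⟨by omega, h3⟩⟩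

variable (hk : Antitone k) (hT : IsLambdaSubword n k T) (hsat : IsSaturatedChain 1 T.flatten)
include hk hT hsat

lemma le_and_strictMonoOn_succ {j : ℕ} (hj : j < T.length)
    (hmono : StrictMonoOn (applyT 1 (T.take j).flatten) (Set.Icc 1 (k j))) :
    (∀ r ∈ Set.Icc 1 (k (j + 1)),
        applyT 1 (T.take j).flatten r ≤ applyT 1 (T.take (j + 1)).flatten r) ∧
      StrictMonoOn (applyT 1 (T.take (j + 1)).flatten) (Set.Icc 1 (k (j + 1))) := by
  have hsub := hT j hj
  rw [gammaK_eq_gammaBlocks] at hsub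
  rw [flatten_take_succ T hj, applyT_append]
  exact le_applyT_and_strictMonoOn hsub (hsat.getD hj)
    (hmono.mono (Set.Icc_subset_Icc_right (hk j.le_succ)))

lemma strictMonoOn {j : ℕ} (hj : j ≤ T.length) :
    StrictMonoOn (applyT 1 (T.take j).flatten) (Set.Icc 1 (k j)) := by
  induction j with
  | zero => exact fun _ _ _ _ h => h
  | succ j ih => exact (hT.le_and_strictMonoOn_succ hk hsat hj (ih (by omega))).2

lemma le_succ {j : ℕ} (hj : j < T.length) {r : ℕ} (hr : r ∈ Set.Icc 1 (k (j + 1))) :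
    applyT 1 (T.take j).flatten r ≤ applyT 1 (T.take (j + 1)).flatten r :=
  (hT.le_and_strictMonoOn_succ hk hsat hj (hT.strictMonoOn hk hsat hj.le)).1 r hr

end IsLambdaSubword

lemma IsLambdaSubword.eq_of_applyT_eq {n : ℕ} {k : ℕ → ℕ} {T T' : List (List (ℕ × ℕ))}
    (hT : IsLambdaSubword n k T) (hT' : IsLambdaSubword n k T')
    (hsat : IsSaturatedChain 1 T.flatten) (hsat' : IsSaturatedChain 1 T'.flatten)
    (hlen : T.length = T'.length)
    (hval : ∀ j ∈ Set.Icc 1 T.length, ∀ r ∈ Set.Icc 1 (k j),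
      applyT 1 (T.take j).flatten r = applyT 1 (T'.take j).flatten r) : T = T' := by
  suffices h : ∀ j ≤ T.length, T.take j = T'.take j by
    have := h T.length le_rfl
    rwa [List.take_length, hlen, List.take_length] at this
  intro j hj
  induction j with
  | zero => simp
  | succ j ih =>
    have hj' : j < T'.length := hlen ▸ hj
    have htake := ih (by omega)
    have hsub := hT j hj
    have hsub' := hT' j hj'
    rw [gammaK_eq_gammaBlocks] at hsub hsub'
    have hsat'j := hsat'.getD hj'
    rw [← htake] at hsat'j
    have hcol := eq_of_sublist_gammaBlocks_of_applyT_eq le_rfl hsub hsub' (hsat.getD hj) hsat'j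
      fun r hr => by
        have := hval (j + 1) ⟨by omega, hj⟩ r hr
        rwa [flatten_take_succ T hj, flatten_take_succ T' hj', applyT_append, applyT_append,
          ← htake] at this
    rw [take_succ_eq_append_getD T hj, take_succ_eq_append_getD T' hj', htake, hcol]

lemma exists_isLambdaSubword_applyT_eq {n : ℕ} {k : ℕ → ℕ} (hk : Antitone k)
    (σ : ℕ → ℕ → ℕ) (hcol : ∀ j ≥ 1, StrictMonoOn (σ · j) (Set.Icc 1 (k j)))
    (hbd : ∀ j ≥ 1, ∀ r ∈ Set.Icc 1 (k j), σ r j ∈ Set.Icc 1 n)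
    (hrow : ∀ j ≥ 1, ∀ r ∈ Set.Icc 1 (k (j + 1)), σ r j ≤ σ r (j + 1)) (m : ℕ) :
    ∃ T, T.length = m ∧ IsLambdaSubword n k T ∧ IsSaturatedChain 1 T.flatten ∧
      ∀ j ∈ Set.Icc 1 m, ∀ r ∈ Set.Icc 1 (k j), applyT 1 (T.take j).flatten r = σ r j := by
  induction m with
  | zero => exact ⟨[], rfl, fun _ h => absurd h (Nat.not_lt_zero _), trivial,
      fun j hj => absurd hj.2 (by have := hj.1; omega)⟩
  | succ m ih =>
    obtain ⟨T, hlen, hT, hsat, hval⟩ := ih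
    have hle : ∀ r ∈ Set.Icc 1 (k (m + 1)), applyT 1 (T.take m).flatten r ≤ σ r (m + 1) := by
      intro r hr
      rcases Nat.eq_zero_or_pos m with rfl | hm
      · exact le_apply_of_strictMonoOn_Icc (hcol 1 le_rfl)
          (hbd 1 le_rfl 1 ⟨le_rfl, hr.1.trans hr.2⟩).1 r hr
      · rw [hval m ⟨hm, le_rfl⟩ r ⟨hr.1, hr.2.trans (hk m.le_succ)⟩]
        exact hrow m hm r hr
    obtain ⟨X, hX, hXsat, hXval⟩ := exists_sublist_gammaBlocks_applyT_eq (hT.fixesOutside m)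
      (hcol (m + 1) (by omega)) (hbd (m + 1) (by omega)) le_rfl hle
      fun r hr => absurd hr.2 (by have := hr.1; omega)
    have hTm : T.take m = T := List.take_of_length_le hlen.le
    refine ⟨T ++ [X], by simp [hlen], fun j hj => ?_, ?_, fun j hj r hr => ?_⟩
    · rw [List.length_append, List.length_singleton] at hj
      rcases Nat.lt_succ_iff_lt_or_eq.1 hj with hj | rfl
      · rw [List.getD_append _ _ _ _ (by omega)]
        exact hT j (by omega)
      · rw [List.getD_append_right _ _ _ _ (by omega), hlen, Nat.sub_self]
        simpa [gammaK_eq_gammaBlocks] using hX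
    · rw [List.flatten_append, isSaturatedChain_append]
      exact ⟨hsat, by simpa [hTm] using hXsat⟩
    · rcases Nat.of_le_succ hj.2 with hj' | rfl
      · rw [List.take_append_of_le_length (by omega)]
        exact hval j ⟨hj.1, by omega⟩ r hr
      · rw [List.take_of_length_le (by simp [hlen]), List.flatten_append, applyT_append]
        simpa [hTm] using hXval r hr

lemma conj_le (n : ℕ) (lam : ℕ → ℕ) (j : ℕ) : conj n lam j ≤ n :=
  (Finset.card_filter_le _ _).trans (Finset.card_range n).le

lemma conj_antitone (n : ℕ) (lam : ℕ → ℕ) : Antitone (conj n lam) := fun _ _ h =>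
  Finset.card_le_card fun i hi => by
    rw [Finset.mem_filter] at hi ⊢
    exact ⟨hi.1, h.trans hi.2⟩

section Partition

variable {n : ℕ} {lam : ℕ → ℕ}

lemma le_lam_zero (hdec : ∀ i, i + 1 < n → lam (i + 1) < lam i) : ∀ i < n, lam i ≤ lam 0
  | 0, _ => le_rfl
  | i + 1, hi => (hdec i hi).le.trans (le_lam_zero hdec i (by omega))

lemma le_lam_zero_of_le_conj (hdec : ∀ i, i + 1 < n → lam (i + 1) < lam i) {r c : ℕ}
    (hr : 1 ≤ r) (h : r ≤ conj n lam c) : c ≤ lam 0 := by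
  by_contra hc
  have hzero : conj n lam c = 0 := by
    rw [conj, Finset.card_eq_zero, Finset.filter_eq_empty_iff]
    intro i hi
    have := le_lam_zero hdec i (Finset.mem_range.1 hi)
    omega
  omega

lemma sigmaOf_of_mem {a : AdmissiblePair n lam} (hw : a.w = 1) {r c : ℕ}
    (h : 1 ≤ r ∧ 1 ≤ c ∧ r ≤ conj n lam c) :
    sigmaOf a r c = applyT 1 (a.T.take c).flatten r := by
  rw [sigmaOf, if_pos h, piCol, hw]

lemma isSSYT_sigmaOf (hdec : ∀ i, i + 1 < n → lam (i + 1) < lam i) {a : AdmissiblePair n lam}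
    (hw : a.w = 1) (hsat : IsSaturatedChain 1 a.T.flatten) : IsSSYT n lam (sigmaOf a) := by
  have hT : IsLambdaSubword n (conj n lam) a.T := a.hsub
  have hk := conj_antitone n lam
  refine ⟨fun r c h => if_neg h, fun r c h1 h2 h3 => ?_, fun r c h1 h2 h3 => ?_,
    fun r c h1 h2 h3 => ?_⟩
  · rw [sigmaOf_of_mem hw ⟨h1, h2, h3⟩]
    exact (hT.fixesOutside c).apply_mem_Icc_iff.2 ⟨h1, h3.trans (conj_le n lam c)⟩
  · have hc := le_lam_zero_of_le_conj hdec h1 h3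
    rw [sigmaOf_of_mem hw ⟨h1, h2, h3.trans (hk c.le_succ)⟩,
      sigmaOf_of_mem hw ⟨h1, by omega, h3⟩]
    exact hT.le_succ hk hsat (by rw [a.hT]; omega) ⟨h1, h3⟩
  · have hc := le_lam_zero_of_le_conj hdec h1 (by omega : r ≤ conj n lam c)
    rw [sigmaOf_of_mem hw ⟨h1, h2, by omega⟩, sigmaOf_of_mem hw ⟨by omega, h2, h3⟩]
    exact hT.strictMonoOn hk hsat (by rw [a.hT]; omega) ⟨h1, by omega⟩ ⟨by omega, h3⟩
      (Nat.lt_succ_self r)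

lemma eq_of_sigmaOf_eq {a a' : AdmissiblePair n lam} (hw : a.w = 1) (hw' : a'.w = 1)
    (hsat : IsSaturatedChain 1 a.T.flatten) (hsat' : IsSaturatedChain 1 a'.T.flatten)
    (h : sigmaOf a = sigmaOf a') : a = a' := by
  have hT : a.T = a'.T := IsLambdaSubword.eq_of_applyT_eq a.hsub a'.hsub hsat hsat'
    (by rw [a.hT, a'.hT]) fun j hj r hr => by
      have := congrFun (congrFun h r) j
      rwa [sigmaOf_of_mem hw ⟨hr.1, hj.1, hr.2⟩,
        sigmaOf_of_mem hw' ⟨hr.1, hj.1, hr.2⟩] at this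
  cases a
  cases a'
  subst hw hw' hT
  rfl

lemma exists_sigmaOf_eq (hdec : ∀ i, i + 1 < n → lam (i + 1) < lam i) {σ : ℕ → ℕ → ℕ}
    (hσ : IsSSYT n lam σ) :
    ∃ a : AdmissiblePair n lam,
      a.w = 1 ∧ IsSaturatedChain 1 a.T.flatten ∧ sigmaOf a = σ := by
  obtain ⟨hzero, hbd, hrow, hcol⟩ := hσ
  obtain ⟨T, hlen, hT, hsat, hval⟩ := exists_isLambdaSubword_applyT_eq (conj_antitone n lam) σ
    (fun j hj => strictMonoOn_Icc_of_lt_add_one fun r hr h => hcol r j hr hj h)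
    (fun j hj r hr => hbd r j hr.1 hj hr.2) (fun j hj r hr => hrow r j hr.1 hj hr.2) (lam 0)
  have hchain := (isSaturatedChain_iff_len_succ 1 hT.mem_flatten).1 hsat
  refine ⟨⟨1, T, fun _ _ => rfl, hlen, hT, fun i hi => (hchain i hi).symm ▸ Nat.lt_succ_self _⟩,
    rfl, hsat, funext fun r => funext fun c => ?_⟩
  by_cases h : 1 ≤ r ∧ 1 ≤ c ∧ r ≤ conj n lam c
  · rw [sigmaOf_of_mem rfl h]
    exact hval c ⟨h.2.1, le_lam_zero_of_le_conj hdec h.1 h.2.2⟩ r ⟨h.1, h.2.2⟩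
  · rw [sigmaOf, if_neg h, hzero r c h]

end Partition

theorem alcove_saturated_bijection_SSYT_general (n : ℕ) (lam : ℕ → ℕ)
    (hdec : ∀ i, i + 1 < n → lam (i + 1) < lam i) :
    Set.BijOn (fun a : AdmissiblePair n lam => sigmaOf a)
      {a : AdmissiblePair n lam | a.w = 1 ∧
        ∀ i < a.T.flatten.length,
          len n (applyT a.w (a.T.flatten.take (i + 1))) =
            len n (applyT a.w (a.T.flatten.take i)) + 1}
      {σ : ℕ → ℕ → ℕ | IsSSYT n lam σ} := by
  have hsat : ∀ a : AdmissiblePair n lam, a.w = 1 →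
      ((∀ i < a.T.flatten.length, len n (applyT a.w (a.T.flatten.take (i + 1))) =
        len n (applyT a.w (a.T.flatten.take i)) + 1) ↔ IsSaturatedChain 1 a.T.flatten) :=
    fun a hw => by
      rw [hw]
      exact (isSaturatedChain_iff_len_succ 1 (IsLambdaSubword.mem_flatten a.hsub)).symm
  refine ⟨fun a ⟨hw, ha⟩ => isSSYT_sigmaOf hdec hw ((hsat a hw).1 ha),
    fun a ⟨hw, ha⟩ a' ⟨hw', ha'⟩ =>
      eq_of_sigmaOf_eq hw hw' ((hsat a hw).1 ha) ((hsat a' hw').1 ha'),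
    fun σ hσ => ?_⟩
  obtain ⟨a, hw, ha, rfl⟩ := exists_sigmaOf_eq hdec hσ
  exact ⟨a, ⟨hw, (hsat a hw).2 ha⟩, rfl⟩

/-- The alcove model realizes SSYT as saturated chains in Bruhat order: for a partition
`λ` with distinct parts, the map `(w, T) ↦ σ(w, T)`, restricted to admissible pairs with
`w = id` whose Bruhat chain is saturated (each step raises the length by exactly `1`),
is a bijection onto `SSYT_{[n]}(λ)`. -/
theorem alcove_saturated_bijection_SSYT (n : ℕ) (hn : 2 ≤ n) (lam : ℕ → ℕ)
    (hdec : ∀ i, i + 1 < n → lam (i + 1) < lam i)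
    (hzero : ∀ i, n - 1 ≤ i → lam i = 0) :
    Set.BijOn (fun a : AdmissiblePair n lam => sigmaOf a)
      {a : AdmissiblePair n lam | a.w = 1 ∧
        ∀ i < a.T.flatten.length,
          len n (applyT a.w (a.T.flatten.take (i + 1))) =
            len n (applyT a.w (a.T.flatten.take i)) + 1}
      {σ : ℕ → ℕ → ℕ | IsSSYT n lam σ} :=
  alcove_saturated_bijection_SSYT_general n lam hdec
end
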